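/- arXiv:2504.03951 — 11 statements merged into one kernel-verified Lean document; each statement's English description precedes it below -/
import Mathlib

section
/- Let a_0, ..., a_n be a sequence of non-negative integers with sum at most n!. If k ≥ n·ln(n)/ln(n/(n-1)) (with n ≥ 2), then n^k > (n-1)^k · n!, and consequently a_n = ⌊P / n^k⌋ where P = Σ_{i=0}^n a_i · i^k. -/
open Finset Nat

lemma fac_lt_pow {n : ℕ} (hn : 2 ≤ n) : n ! < n ^ n := by
  obtain ⟨m, rfl⟩ : ∃ m, n = m + 1 := ⟨n - 1, by omega⟩
  have hm : 1 ≤ m := by omega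
  calc (m + 1)! = (m + 1) * m ! := rfl
    _ ≤ (m + 1) * m ^ m := Nat.mul_le_mul_left _ m.factorial_le_pow
    _ < (m + 1) * (m + 1) ^ m := by
        have h1 : m ^ m < (m + 1) ^ m :=
          Nat.pow_lt_pow_left (by omega) (by omega)
        exact Nat.mul_lt_mul_of_le_of_lt (le_refl _) h1 (by omega)
    _ = (m + 1) ^ (m + 1) := by ring

theorem stmt0 (n k : ℕ) (hn : 2 ≤ n) (a : ℕ → ℕ)
    (ha : ∑ i ∈ Finset.range (n + 1), a i ≤ n !)
    (hk : (n : ℝ) * Real.log n / Real.log ((n : ℝ) / ((n : ℝ) - 1)) ≤ (k : ℝ)) :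
    (n - 1) ^ k * n ! < n ^ k ∧
    a n = (∑ i ∈ Finset.range (n + 1), a i * i ^ k) / n ^ k := by
  have hn1 : (1:ℝ) ≤ (n:ℝ) - 1 := by
    have : (2:ℝ) ≤ (n:ℝ) := by exact_mod_cast hn
    linarith
  have hq : (1:ℝ) < (n:ℝ) / ((n:ℝ) - 1) := by
    rw [lt_div_iff₀ (by linarith)]
    linarith
  have hlogq : 0 < Real.log ((n:ℝ) / ((n:ℝ) - 1)) := Real.log_pos hq
  have hmain : (n:ℝ) * Real.log n ≤ (k:ℝ) * Real.log ((n:ℝ) / ((n:ℝ) - 1)) := by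
    rw [div_le_iff₀ hlogq] at hk
    linarith
  -- n^n ≤ (n/(n-1))^k
  have hpow : ((n:ℝ)) ^ n ≤ ((n:ℝ) / ((n:ℝ) - 1)) ^ k := by
    have h1 : Real.log ((n:ℝ) ^ n) ≤ Real.log (((n:ℝ) / ((n:ℝ) - 1)) ^ k) := by
      rw [Real.log_pow, Real.log_pow]
      exact hmain
    have hnpos : (0:ℝ) < (n:ℝ) ^ n := by positivity
    have hqpos : (0:ℝ) < ((n:ℝ) / ((n:ℝ) - 1)) ^ k := by positivity
    exact (Real.log_le_log_iff hnpos hqpos).mp h1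
  have key : ((n:ℝ) - 1) ^ k * (n ! : ℝ) < (n:ℝ) ^ k := by
    have hfac : (n ! : ℝ) < (n:ℝ) ^ n := by exact_mod_cast fac_lt_pow hn
    have hpos : (0:ℝ) < ((n:ℝ) - 1) ^ k := by positivity
    calc ((n:ℝ) - 1) ^ k * (n ! : ℝ) < ((n:ℝ) - 1) ^ k * (n:ℝ) ^ n := by
          exact (mul_lt_mul_iff_right₀ hpos).mpr hfac
      _ ≤ ((n:ℝ) - 1) ^ k * ((n:ℝ) / ((n:ℝ) - 1)) ^ k := by
          exact mul_le_mul_of_nonneg_left hpow (le_of_lt hpos)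
      _ = (((n:ℝ) - 1) * ((n:ℝ) / ((n:ℝ) - 1))) ^ k := by rw [mul_pow]
      _ = (n:ℝ) ^ k := by
          rw [mul_div_cancel₀ _ (by linarith : (n:ℝ) - 1 ≠ 0)]
  have hcast : ((n - 1 : ℕ) : ℝ) = (n:ℝ) - 1 := by
    have : 1 ≤ n := by omega
    push_cast [this]; ring
  have hnatkey : (n - 1) ^ k * n ! < n ^ k := by
    have : (((n - 1) ^ k * n ! : ℕ) : ℝ) < ((n ^ k : ℕ) : ℝ) := by
      push_cast [hcast]
      exact key
    exact_mod_cast this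
  refine ⟨hnatkey, ?_⟩
  -- rest: P = (rest) + a n * n^k with rest < n^k
  rw [Finset.sum_range_succ]
  have hrest : ∑ i ∈ Finset.range n, a i * i ^ k < n ^ k := by
    calc ∑ i ∈ Finset.range n, a i * i ^ k
        ≤ ∑ i ∈ Finset.range n, a i * (n - 1) ^ k := by
          apply Finset.sum_le_sum
          intro i hi
          apply Nat.mul_le_mul_left
          exact Nat.pow_le_pow_left (by simp at hi; omega) k
      _ = (∑ i ∈ Finset.range n, a i) * (n - 1) ^ k := by
          rw [Finset.sum_mul]
      _ ≤ n ! * (n - 1) ^ k := by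
          apply Nat.mul_le_mul_right
          calc ∑ i ∈ Finset.range n, a i ≤ ∑ i ∈ Finset.range (n + 1), a i := by
                apply Finset.sum_le_sum_of_subset
                exact Finset.range_subset_range.mpr (by omega)
            _ ≤ n ! := ha
      _ < n ^ k := by rw [Nat.mul_comm]; exact hnatkey
  rw [Nat.add_mul_div_right _ _ (by positivity : 0 < n ^ k),
    Nat.div_eq_of_lt hrest, Nat.zero_add]
end

section
/- If every agent values every good positively and each agent's valuation is additive, then in any EFX allocation of m ≤ n goods to n agents, every agent receives at most one good. Consequently, the number of EFX allocations in such an instance is exactly n!/(n-m)!. -/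
open Finset Nat

theorem stmt1 (n m : ℕ) (hm : m ≤ n)
    (v : Fin n → Fin m → ℝ) (hv : ∀ i g, 0 < v i g) :
    (∀ f : Fin m → Fin n,
      (∀ i j : Fin n, ∀ g : Fin m, f g = j →
        ∑ x ∈ univ.filter (fun x => f x = i), v i x ≥
          ∑ x ∈ (univ.filter (fun x => f x = j)).erase g, v i x) →
      ∀ i : Fin n, (univ.filter (fun x => f x = i)).card ≤ 1) ∧
    Fintype.card {f : Fin m → Fin n //
        ∀ i j : Fin n, ∀ g : Fin m, f g = j →
          ∑ x ∈ univ.filter (fun x => f x = i), v i x ≥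
            ∑ x ∈ (univ.filter (fun x => f x = j)).erase g, v i x} =
      n ! / (n - m)! := by
  have key : ∀ f : Fin m → Fin n,
      (∀ i j : Fin n, ∀ g : Fin m, f g = j →
        ∑ x ∈ univ.filter (fun x => f x = i), v i x ≥
          ∑ x ∈ (univ.filter (fun x => f x = j)).erase g, v i x) →
      ∀ j : Fin n, (univ.filter (fun x => f x = j)).card ≤ 1 := by
    intro f hf j
    by_contra h
    push_neg at h
    obtain ⟨g, hg⟩ := Finset.card_pos.mp (by omega : 0 < (univ.filter (fun x => f x = j)).card)
    have hgj : f g = j := by simpa using hg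
    have hsum : ∑ i : Fin n, (univ.filter (fun x => f x = i)).card = m := by
      rw [← Finset.card_eq_sum_card_fiberwise (fun x _ => Finset.mem_univ (f x))]
      simp
    have hex : ∃ i : Fin n, (univ.filter (fun x => f x = i)).card = 0 := by
      by_contra he
      push_neg at he
      have hlt : ∑ _i : Fin n, 1 < ∑ i : Fin n, (univ.filter (fun x => f x = i)).card := by
        apply Finset.sum_lt_sum
        · intro i _
          exact Nat.one_le_iff_ne_zero.mpr (he i)
        · exact ⟨j, Finset.mem_univ j, h⟩
      simp only [Finset.sum_const, Finset.card_univ, Fintype.card_fin, smul_eq_mul, mul_one] at hlt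
      omega
    obtain ⟨i, hi⟩ := hex
    have hfe := hf i j g hgj
    have hL : ∑ x ∈ univ.filter (fun x => f x = i), v i x = 0 := by
      rw [Finset.card_eq_zero.mp hi, Finset.sum_empty]
    have hR : 0 < ∑ x ∈ (univ.filter (fun x => f x = j)).erase g, v i x := by
      apply Finset.sum_pos
      · intro x _; exact hv i x
      · rw [← Finset.card_pos, Finset.card_erase_of_mem hg]
        omega
    rw [hL] at hfe
    linarith
  refine ⟨key, ?_⟩
  have hiff : ∀ f : Fin m → Fin n,
      (∀ i j : Fin n, ∀ g : Fin m, f g = j →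
        ∑ x ∈ univ.filter (fun x => f x = i), v i x ≥
          ∑ x ∈ (univ.filter (fun x => f x = j)).erase g, v i x) ↔ Function.Injective f := by
    intro f
    constructor
    · intro hf a b hab
      have := key f hf (f a)
      exact Finset.card_le_one.mp this a (by simp) b (by simp [hab])
    · intro hinj i j g hg
      have hempty : (univ.filter (fun x => f x = j)).erase g = ∅ := by
        apply Finset.eq_empty_of_forall_notMem
        intro x hx
        rw [Finset.mem_erase, Finset.mem_filter] at hx
        exact hx.1 (hinj (hx.2.2.trans hg.symm))
      rw [hempty, Finset.sum_empty]
      exact Finset.sum_nonneg fun x _ => (hv i x).le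
  have := Fintype.card_congr
    ((Equiv.subtypeEquivRight hiff).trans (Equiv.subtypeInjectiveEquivEmbedding (Fin m) (Fin n)))
  rw [this, Fintype.card_embedding_eq, Fintype.card_fin, Fintype.card_fin,
    Nat.descFactorial_eq_div hm]
end

section
/- Consider n agents and m = n+1 goods with additive valuations given by v_i(g_j) = 2 if i = j, v_i(g_j) = 1 if j = n+1, and v_i(g_j) = 0 otherwise. Then an allocation is EFX if and only if each agent i receives good g_i and exactly one agent additionally receives g_{n+1}. Consequently, this instance has exactly n EFX allocations. -/
open Finset

private lemma sumV_eq {n : ℕ} (i : Fin n) (S : Finset (Fin (n + 1))) :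
    ∑ x ∈ S, (if (x : ℕ) = (i : ℕ) then (2 : ℝ) else if (x : ℕ) = n then 1 else 0)
      = (if i.castSucc ∈ S then 2 else 0) + (if Fin.last n ∈ S then 1 else 0) := by
  have hpt : ∀ x ∈ S, (if (x : ℕ) = (i : ℕ) then (2 : ℝ) else if (x : ℕ) = n then 1 else 0)
      = (if x = i.castSucc then (2:ℝ) else 0) + (if x = Fin.last n then (1:ℝ) else 0) := by
    intro x _
    rcases eq_or_ne x i.castSucc with rfl | hx
    · have h1 : ((i.castSucc : Fin (n+1)) : ℕ) = (i : ℕ) := by simp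
      have h2 : i.castSucc ≠ Fin.last n := by
        intro h
        have := congrArg (fun y : Fin (n+1) => (y : ℕ)) h
        simp at this
        exact absurd this (Nat.ne_of_lt i.isLt)
      rw [if_pos h1, if_pos rfl, if_neg h2]
      norm_num
    · rcases eq_or_ne x (Fin.last n) with rfl | hx2
      · have h1 : ((Fin.last n : Fin (n+1)) : ℕ) ≠ (i : ℕ) := by
          simp [Fin.val_last]
          exact (Nat.ne_of_lt i.isLt).symm
        rw [if_neg h1, if_pos (by simp [Fin.val_last]), if_neg (by simpa using hx), if_pos rfl]
        norm_num
      · have h1 : (x : ℕ) ≠ (i : ℕ) := fun h => hx (Fin.ext (by simp [h]))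
        have h2 : (x : ℕ) ≠ n := fun h => hx2 (Fin.ext (by simp [h, Fin.val_last]))
        rw [if_neg h1, if_neg h2, if_neg hx, if_neg hx2]
        norm_num
  rw [Finset.sum_congr rfl hpt, Finset.sum_add_distrib,
    Finset.sum_ite_eq' S i.castSucc (fun _ => (2:ℝ)),
    Finset.sum_ite_eq' S (Fin.last n) (fun _ => (1:ℝ))]

private lemma efx_iff_core (n : ℕ) (f : Fin (n + 1) → Fin n) :
    (∀ i j : Fin n, ∀ g : Fin (n + 1), f g = j →
        ∑ x ∈ univ.filter (fun x => f x = i),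
            (if (x : ℕ) = (i : ℕ) then (2:ℝ) else if (x : ℕ) = n then 1 else 0) ≥
          ∑ x ∈ (univ.filter (fun x => f x = j)).erase g,
            (if (x : ℕ) = (i : ℕ) then (2:ℝ) else if (x : ℕ) = n then 1 else 0)) ↔
      ∀ i : Fin n, f i.castSucc = i := by
  constructor
  · intro hefx
    by_contra hc
    push_neg at hc
    classical
    set T : Finset (Fin n) := univ.filter (fun a => f a.castSucc ≠ a) with hT
    have hTmem : ∀ a : Fin n, a ∈ T ↔ f a.castSucc ≠ a := by
      intro a; simp [hT]
    have key : ∀ a : Fin n, f a.castSucc ≠ a →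
        univ.filter (fun x => f x = f a.castSucc) = {a.castSucc} := by
      intro a ha
      apply Finset.eq_singleton_iff_unique_mem.mpr
      refine ⟨by simp, ?_⟩
      intro g' hg'
      by_contra hne
      have hfg' : f g' = f a.castSucc := by simpa using hg'
      have h := hefx a (f a.castSucc) g' hfg'
      rw [sumV_eq, sumV_eq] at h
      have h1 : a.castSucc ∉ univ.filter (fun x => f x = a) := by simp [ha]
      have h2 : a.castSucc ∈ (univ.filter (fun x => f x = f a.castSucc)).erase g' := by
        rw [Finset.mem_erase]
        exact ⟨Ne.symm hne, by simp⟩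
      rw [if_neg h1, if_pos h2] at h
      split_ifs at h <;> linarith
    have hmaps : ∀ a ∈ T, f a.castSucc ∈ T := by
      intro a haT
      have ha := (hTmem a).mp haT
      rw [hTmem]
      intro hfix
      have hmem : (f a.castSucc).castSucc ∈ univ.filter (fun x => f x = f a.castSucc) := by
        simp [hfix]
      rw [key a ha, Finset.mem_singleton] at hmem
      exact ha (by rw [(Fin.castSucc_injective n) hmem])
    have hinj : ∀ a ∈ T, ∀ b ∈ T, f a.castSucc = f b.castSucc → a = b := by
      intro a haT b hbT hab
      have h1 := key a ((hTmem a).mp haT)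
      have h2 := key b ((hTmem b).mp hbT)
      rw [hab, h2] at h1
      exact (Fin.castSucc_injective n) (Finset.singleton_injective h1.symm)
    set p : Fin n := f (Fin.last n) with hpdef
    have hpT : p ∉ T := by
      intro hpT
      obtain ⟨s, hsT, hsp⟩ :=
        Finset.surj_on_of_inj_on_of_card_le (fun a _ => f a.castSucc) hmaps
          (fun a₁ a₂ h1 h2 hab => hinj a₁ h1 a₂ h2 hab) le_rfl p hpT
      have hlast : Fin.last n ∈ univ.filter (fun x => f x = p) := by simp [hpdef]
      rw [show (univ.filter (fun x => f x = p)) =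
          univ.filter (fun x => f x = f s.castSucc) by rw [← hsp], key s ((hTmem s).mp hsT),
        Finset.mem_singleton] at hlast
      have := congrArg (fun y : Fin (n+1) => (y : ℕ)) hlast
      simp [Fin.val_last] at this
      exact absurd this.symm (Nat.ne_of_lt s.isLt)
    have hp : f p.castSucc = p := by
      by_contra h
      exact hpT ((hTmem p).mpr h)
    obtain ⟨a, ha⟩ := hc
    set b : Fin n := f a.castSucc with hbdef
    have hAb := key a ha
    have hba : b ≠ a := fun h => ha (hbdef ▸ h)
    have h := hefx b p p.castSucc hp
    rw [sumV_eq, sumV_eq] at h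
    have h1 : b.castSucc ∉ univ.filter (fun x => f x = b) := by
      rw [show (univ.filter (fun x => f x = b)) =
        univ.filter (fun x => f x = f a.castSucc) from rfl, hAb, Finset.mem_singleton]
      intro hcc
      exact hba ((Fin.castSucc_injective n) hcc)
    have h2 : Fin.last n ∉ univ.filter (fun x => f x = b) := by
      rw [show (univ.filter (fun x => f x = b)) =
        univ.filter (fun x => f x = f a.castSucc) from rfl, hAb, Finset.mem_singleton]
      intro hcc
      have := congrArg (fun y : Fin (n+1) => (y : ℕ)) hcc
      simp [Fin.val_last] at this
      exact absurd this (Nat.ne_of_lt a.isLt).symm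
    have h3 : Fin.last n ∈ (univ.filter (fun x => f x = p)).erase p.castSucc := by
      rw [Finset.mem_erase]
      refine ⟨?_, by simp [hpdef]⟩
      intro hcc
      have := congrArg (fun y : Fin (n+1) => (y : ℕ)) hcc
      simp [Fin.val_last] at this
      exact absurd this (Nat.ne_of_lt p.isLt).symm
    rw [if_neg h1, if_neg h2, if_pos h3] at h
    split_ifs at h <;> linarith
  · intro hP i j g hg
    rcases eq_or_ne i j with rfl | hij
    · refine Finset.sum_le_sum_of_subset_of_nonneg (Finset.erase_subset _ _) ?_
      intro x _ _
      split_ifs <;> norm_num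
    · rw [ge_iff_le, sumV_eq, sumV_eq]
      have hi : i.castSucc ∈ univ.filter (fun x => f x = i) := by simp [hP i]
      have hj : i.castSucc ∉ (univ.filter (fun x => f x = j)).erase g := by
        intro hcc
        rw [Finset.mem_erase] at hcc
        have := hcc.2
        simp [hP i] at this
        exact hij this
      rw [if_pos hi, if_neg hj]
      split_ifs <;> linarith

theorem stmt3 (n : ℕ) (hn : 0 < n)
    (v : Fin n → Fin (n + 1) → ℝ)
    (hv : ∀ i j, v i j = if (j : ℕ) = (i : ℕ) then 2 else if (j : ℕ) = n then 1 else 0) :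
    (∀ f : Fin (n + 1) → Fin n,
      ((∀ i j : Fin n, ∀ g : Fin (n + 1), f g = j →
          ∑ x ∈ univ.filter (fun x => f x = i), v i x ≥
            ∑ x ∈ (univ.filter (fun x => f x = j)).erase g, v i x) ↔
        ∀ i : Fin n, f i.castSucc = i)) ∧
    Fintype.card {f : Fin (n + 1) → Fin n //
        ∀ i j : Fin n, ∀ g : Fin (n + 1), f g = j →
          ∑ x ∈ univ.filter (fun x => f x = i), v i x ≥
            ∑ x ∈ (univ.filter (fun x => f x = j)).erase g, v i x} = n := by
  have hv' : ∀ (f : Fin (n + 1) → Fin n),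
      (∀ i j : Fin n, ∀ g : Fin (n + 1), f g = j →
          ∑ x ∈ univ.filter (fun x => f x = i), v i x ≥
            ∑ x ∈ (univ.filter (fun x => f x = j)).erase g, v i x) ↔
        ∀ i : Fin n, f i.castSucc = i := by
    intro f
    have : ∀ (i : Fin n) (S : Finset (Fin (n+1))), ∑ x ∈ S, v i x =
        ∑ x ∈ S, (if (x : ℕ) = (i : ℕ) then (2:ℝ) else if (x : ℕ) = n then 1 else 0) := by
      intro i S
      exact Finset.sum_congr rfl fun x _ => hv i x
    constructor
    · intro h
      exact (efx_iff_core n f).mp (fun i j g hg => by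
        rw [← this i, ← this i]; exact h i j g hg)
    · intro h i j g hg
      rw [this i, this i]
      exact (efx_iff_core n f).mpr h i j g hg
  refine ⟨hv', ?_⟩
  classical
  have e1 : {f : Fin (n + 1) → Fin n //
      ∀ i j : Fin n, ∀ g : Fin (n + 1), f g = j →
        ∑ x ∈ univ.filter (fun x => f x = i), v i x ≥
          ∑ x ∈ (univ.filter (fun x => f x = j)).erase g, v i x} ≃
      {f : Fin (n + 1) → Fin n // ∀ i : Fin n, f i.castSucc = i} :=
    Equiv.subtypeEquivRight hv'
  have e2 : {f : Fin (n + 1) → Fin n // ∀ i : Fin n, f i.castSucc = i} ≃ Fin n := by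
    refine ⟨fun f => f.1 (Fin.last n),
      fun p => ⟨fun g => if h : (g : ℕ) < n then ⟨(g : ℕ), h⟩ else p, ?_⟩, ?_, ?_⟩
    · intro i
      have h : ((i.castSucc : Fin (n+1)) : ℕ) < n := by simpa using i.isLt
      simp only [dif_pos h]
      exact Fin.ext (by simp)
    · intro f
      apply Subtype.ext
      funext g
      by_cases h : (g : ℕ) < n
      · simp only [dif_pos h]
        have h2 : f.1 g = ⟨(g : ℕ), h⟩ := by
          have h3 := f.2 ⟨(g : ℕ), h⟩
          rwa [show (Fin.castSucc ⟨(g : ℕ), h⟩) = g from Fin.ext (by simp)] at h3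
        exact h2.symm
      · have hg : g = Fin.last n := Fin.ext (by
          have := g.isLt
          simp only [Fin.val_last]
          omega)
        simp only [dif_neg h]
        rw [hg]
    · intro p
      simp only [Fin.val_last]
      rw [dif_neg (lt_irrefl n)]
  rw [Fintype.card_congr (e1.trans e2), Fintype.card_fin]
end

section
/- Consider n agents and m = n+2 goods with additive valuations v_i(g_j) = 3 if i = j, v_i(g_j) = 1 if j ∈ {n+1, n+2}, and v_i(g_j) = 0 otherwise. Then in every EFX allocation, each agent i receives good g_i; hence this instance has exactly n² EFX allocations (determined by which agents receive g_{n+1} and g_{n+2}). -/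
open Finset

namespace Stmt4Aux

def emb (n : ℕ) (i : Fin n) : Fin (n + 2) := i.castSucc.castSucc

lemma emb_val {n : ℕ} (i : Fin n) : ((emb n i) : ℕ) = (i : ℕ) := rfl

section

variable {n : ℕ} (v : Fin n → Fin (n + 2) → ℝ)
  (hv : ∀ i j, v i j =
    if (j : ℕ) = (i : ℕ) then 3 else if (j : ℕ) = n ∨ (j : ℕ) = n + 1 then 1 else 0)

include hv

lemma v_nonneg (i : Fin n) (j : Fin (n+2)) : 0 ≤ v i j := by
  rw [hv]; split_ifs <;> norm_num

lemma v_own (i : Fin n) : v i (emb n i) = 3 := by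
  rw [hv, if_pos (emb_val i)]

lemma v_small {i : Fin n} {g : Fin (n+2)} (h : v i g ≤ 0) :
    (g : ℕ) < n ∧ (g : ℕ) ≠ (i : ℕ) := by
  rw [hv] at h
  split_ifs at h with h1 h2
  · norm_num at h
  · norm_num at h
  · push_neg at h2
    have := g.isLt
    omega

lemma single_le (i : Fin n) {g : Fin (n+2)} {s : Finset (Fin (n+2))} (hg : g ∈ s) :
    v i g ≤ ∑ x ∈ s, v i x :=
  Finset.single_le_sum (fun x _ => v_nonneg v hv i x) hg

lemma sum_le_two (i : Fin n) (s : Finset (Fin (n+2))) (hs : emb n i ∉ s) :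
    ∑ x ∈ s, v i x ≤ 2 := by
  set gN : Fin (n+2) := ⟨n, by omega⟩ with hgN
  set gN1 : Fin (n+2) := ⟨n+1, by omega⟩ with hgN1
  have key : ∀ x ∈ s, v i x ≤ (if x = gN then (1:ℝ) else 0) +
      (if x = gN1 then (1:ℝ) else 0) := by
    intro x hx
    have hxne : (x:ℕ) ≠ (i:ℕ) := by
      intro h
      apply hs
      have hx' : emb n i = x := Fin.ext (by simp [emb_val, h])
      rwa [hx']
    rw [hv, if_neg hxne]
    by_cases h1 : (x:ℕ) = n
    · rw [if_pos (Or.inl h1), if_pos (Fin.ext h1 : x = gN)]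
      split_ifs <;> norm_num
    · by_cases h2 : (x:ℕ) = n+1
      · rw [if_pos (Or.inr h2), if_neg (fun hh : x = gN => h1 (by rw [hh])),
          if_pos (Fin.ext h2 : x = gN1)]
        norm_num
      · rw [if_neg (by tauto : ¬((x:ℕ) = n ∨ (x:ℕ) = n + 1)),
          if_neg (fun hh : x = gN => h1 (by rw [hh])),
          if_neg (fun hh : x = gN1 => h2 (by rw [hh]))]
        norm_num
  have h2 : ∑ x ∈ s, v i x ≤
      ∑ x ∈ s, ((if x = gN then (1:ℝ) else 0) + (if x = gN1 then (1:ℝ) else 0)) :=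
    Finset.sum_le_sum key
  have h3 : ∑ x ∈ s, ((if x = gN then (1:ℝ) else 0) + (if x = gN1 then (1:ℝ) else 0)) ≤
      ∑ x ∈ univ, ((if x = gN then (1:ℝ) else 0) + (if x = gN1 then (1:ℝ) else 0)) :=
    Finset.sum_le_sum_of_subset_of_nonneg (subset_univ s)
      (by intro x _ _; split_ifs <;> norm_num)
  have h4 : ∑ x ∈ (univ : Finset (Fin (n+2))),
      ((if x = gN then (1:ℝ) else 0) + (if x = gN1 then (1:ℝ) else 0)) = 2 := by
    rw [Finset.sum_add_distrib, Finset.sum_ite_eq' univ gN (fun _ => (1:ℝ)),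
      Finset.sum_ite_eq' univ gN1 (fun _ => (1:ℝ))]
    simp
    norm_num
  linarith

lemma efx_fix (f : Fin (n+2) → Fin n)
    (hf : ∀ i j : Fin n, ∀ g : Fin (n + 2), f g = j →
      ∑ x ∈ univ.filter (fun x => f x = i), v i x ≥
        ∑ x ∈ (univ.filter (fun x => f x = j)).erase g, v i x) :
    ∀ i, f (emb n i) = i := by
  by_contra hcon
  push_neg at hcon
  obtain ⟨i, hi⟩ := hcon
  have two_goods : ∀ (a p : Fin n) (g g' : Fin (n+2)), f g = p → f g' = p → g ≠ g' →
      v a g ≤ ∑ x ∈ univ.filter (fun x => f x = a), v a x := by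
    intro a p g g' hg hg' hne
    refine le_trans (single_le v hv a ?_) (hf a p g' hg')
    exact Finset.mem_erase.mpr ⟨hne, by simp [hg, hg']⟩
  have own_bound : ∀ a : Fin n, f (emb n a) ≠ a →
      ∑ x ∈ univ.filter (fun x => f x = a), v a x ≤ 2 := by
    intro a ha
    exact sum_le_two v hv a _ (by simp [ha])
  have hj : f (emb n i) = f (emb n i) := rfl
  set j := f (emb n i) with hjdef
  have hAj : ∀ g, f g = j → g = emb n i := by
    intro g hg
    by_contra hne
    have h1 := two_goods i j (emb n i) g rfl hg (Ne.symm hne)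
    have h2 := own_bound i hi
    rw [v_own v hv] at h1
    linarith
  have hij : (i:ℕ) ≠ (j:ℕ) := by
    intro h
    exact hi (Fin.ext h).symm
  have hSj : ∑ x ∈ univ.filter (fun x => f x = j), v j x = 0 := by
    have hfil : univ.filter (fun x => f x = j) = {emb n i} := by
      ext g
      simp only [mem_filter, mem_univ, true_and, mem_singleton]
      exact ⟨hAj g, fun h => by rw [h]⟩
    rw [hfil, Finset.sum_singleton, hv, emb_val]
    rw [if_neg hij, if_neg (by have := i.isLt; omega)]
  have small : ∀ g g' : Fin (n+2), f g = f g' → g ≠ g' → (g:ℕ) < n := by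
    intro g g' hgg hne
    have h1 := two_goods j (f g') g g' hgg rfl hne
    rw [hSj] at h1
    exact (v_small v hv h1).1
  have key : ∀ g g' : Fin (n+2), f g = f g' → g ≠ g' → (g:ℕ) ≠ ((f g' : Fin n):ℕ) → False := by
    intro g g' hgg hne hgp
    have hgn := small g g' hgg hne
    have hel : emb n ⟨(g:ℕ), hgn⟩ = g := Fin.ext rfl
    have hfl : f (emb n ⟨(g:ℕ), hgn⟩) ≠ ⟨(g:ℕ), hgn⟩ := by
      rw [hel, hgg]
      intro h
      exact hgp (by rw [h])
    have h2 := own_bound _ hfl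
    have h3 := two_goods ⟨(g:ℕ), hgn⟩ (f g') (emb n ⟨(g:ℕ), hgn⟩) g'
      (by rw [hel, hgg]) rfl (by rw [hel]; exact hne)
    rw [v_own v hv] at h3
    linarith
  have hinj : Function.Injective f := by
    intro g g' hgg
    by_contra hne
    by_cases hcase : (g:ℕ) = ((f g' : Fin n):ℕ)
    · have hvne : (g:ℕ) ≠ (g':ℕ) := fun h => hne (Fin.ext h)
      have hcase2 : (g':ℕ) ≠ ((f g : Fin n):ℕ) := by
        rw [hgg, ← hcase]
        exact Ne.symm hvne
      exact key g' g hgg.symm (Ne.symm hne) hcase2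
    · exact key g g' hgg hne hcase
  have hcard := Fintype.card_le_of_injective f hinj
  simp only [Fintype.card_fin] at hcard
  omega

lemma efx_of_fix (f : Fin (n+2) → Fin n) (hfix : ∀ a, f (emb n a) = a) :
    ∀ i j : Fin n, ∀ g : Fin (n + 2), f g = j →
      ∑ x ∈ univ.filter (fun x => f x = i), v i x ≥
        ∑ x ∈ (univ.filter (fun x => f x = j)).erase g, v i x := by
  intro i j g hg
  have hLHS : (3:ℝ) ≤ ∑ x ∈ univ.filter (fun x => f x = i), v i x := by
    have hm : emb n i ∈ univ.filter (fun x => f x = i) := by simp [hfix i]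
    have h := single_le v hv i hm
    rwa [v_own v hv] at h
  by_cases hij : i = j
  · subst hij
    exact Finset.sum_le_sum_of_subset_of_nonneg (Finset.erase_subset _ _)
      (fun x _ _ => v_nonneg v hv i x)
  · have h2 : ∑ x ∈ (univ.filter (fun x => f x = j)).erase g, v i x ≤ 2 := by
      apply sum_le_two v hv
      intro hmem
      have h3 := Finset.mem_of_mem_erase hmem
      simp only [mem_filter, mem_univ, true_and] at h3
      rw [hfix i] at h3
      exact hij h3
    linarith

end

def efxEquiv (n : ℕ) :
    {f : Fin (n+2) → Fin n // ∀ a, f (emb n a) = a} ≃ Fin n × Fin n where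
  toFun f := (f.1 ⟨n, by omega⟩, f.1 ⟨n+1, by omega⟩)
  invFun p := ⟨fun g => if h : (g:ℕ) < n then ⟨g, h⟩ else if (g:ℕ) = n then p.1 else p.2, by
    intro a
    show (if h : ((emb n a : Fin (n+2)):ℕ) < n then (⟨((emb n a : Fin (n+2)):ℕ), h⟩ : Fin n)
        else if ((emb n a : Fin (n+2)):ℕ) = n then p.1 else p.2) = a
    rw [show ((emb n a : Fin (n+2)) : ℕ) = (a:ℕ) from rfl, dif_pos a.isLt]⟩
  left_inv f := by
    apply Subtype.ext; funext g
    show (if h : (g:ℕ) < n then (⟨(g:ℕ), h⟩ : Fin n)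
        else if (g:ℕ) = n then f.1 ⟨n, by omega⟩ else f.1 ⟨n+1, by omega⟩) = f.1 g
    by_cases h : (g:ℕ) < n
    · rw [dif_pos h]
      have he : emb n ⟨(g:ℕ), h⟩ = g := Fin.ext rfl
      have h2 := f.2 ⟨(g:ℕ), h⟩
      rw [he] at h2
      exact h2.symm
    · rw [dif_neg h]
      by_cases h2 : (g:ℕ) = n
      · rw [if_pos h2]
        exact congrArg f.1 (Fin.ext h2.symm)
      · rw [if_neg h2]
        refine congrArg f.1 (Fin.ext ?_)
        have := g.isLt
        show n + 1 = (g:ℕ)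
        omega
  right_inv p := by
    show ((if h : ((⟨n, by omega⟩ : Fin (n+2)):ℕ) < n then (⟨((⟨n, by omega⟩ : Fin (n+2)):ℕ), h⟩ : Fin n)
        else if ((⟨n, by omega⟩ : Fin (n+2)):ℕ) = n then p.1 else p.2),
        (if h : ((⟨n+1, by omega⟩ : Fin (n+2)):ℕ) < n then (⟨((⟨n+1, by omega⟩ : Fin (n+2)):ℕ), h⟩ : Fin n)
        else if ((⟨n+1, by omega⟩ : Fin (n+2)):ℕ) = n then p.1 else p.2)) = p
    have e1 : ((⟨n, by omega⟩ : Fin (n+2)) : ℕ) = n := rfl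
    have e2 : ((⟨n+1, by omega⟩ : Fin (n+2)) : ℕ) = n+1 := rfl
    rw [dif_neg (by omega), if_pos e1, dif_neg (by omega), if_neg (by rw [e2]; omega)]

end Stmt4Aux

theorem stmt4 (n : ℕ) (hn : 2 ≤ n)
    (v : Fin n → Fin (n + 2) → ℝ)
    (hv : ∀ i j, v i j =
      if (j : ℕ) = (i : ℕ) then 3 else if (j : ℕ) = n ∨ (j : ℕ) = n + 1 then 1 else 0) :
    (∀ f : Fin (n + 2) → Fin n,
      (∀ i j : Fin n, ∀ g : Fin (n + 2), f g = j →
        ∑ x ∈ univ.filter (fun x => f x = i), v i x ≥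
          ∑ x ∈ (univ.filter (fun x => f x = j)).erase g, v i x) →
      ∀ i : Fin n, f i.castSucc.castSucc = i) ∧
    Fintype.card {f : Fin (n + 2) → Fin n //
        ∀ i j : Fin n, ∀ g : Fin (n + 2), f g = j →
          ∑ x ∈ univ.filter (fun x => f x = i), v i x ≥
            ∑ x ∈ (univ.filter (fun x => f x = j)).erase g, v i x} = n ^ 2 := by
  constructor
  · intro f hf i
    exact Stmt4Aux.efx_fix v hv f hf i
  · have hiff : ∀ f : Fin (n+2) → Fin n,
        (∀ i j : Fin n, ∀ g : Fin (n + 2), f g = j →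
          ∑ x ∈ univ.filter (fun x => f x = i), v i x ≥
            ∑ x ∈ (univ.filter (fun x => f x = j)).erase g, v i x) ↔
        ∀ a, f (Stmt4Aux.emb n a) = a :=
      fun f => ⟨Stmt4Aux.efx_fix v hv f, Stmt4Aux.efx_of_fix v hv f⟩
    rw [Fintype.card_congr ((Equiv.subtypeEquivRight hiff).trans (Stmt4Aux.efxEquiv n))]
    rw [Fintype.card_prod, Fintype.card_fin]
    ring
end

section
/- Consider n agents with identical additive valuations over m ≥ n goods given by v(g_j) = 1 for j ≤ n-1 and v(g_j) = 0 for j ≥ n. Then an allocation is EFX if and only if n-1 agents each receive exactly one good from {g_1,...,g_{n-1}} and the remaining agent receives all other goods. Consequently, this instance has exactly n! EFX allocations. -/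
open Finset Nat

private lemma card_filter_lt_val {m k : ℕ} (h : k ≤ m) :
    (univ.filter (fun x : Fin m => (x : ℕ) < k)).card = k := by
  have heq : univ.filter (fun x : Fin m => (x : ℕ) < k)
      = (univ : Finset (Fin k)).map (Fin.castLEEmb h) := by
    ext x
    rw [Finset.mem_filter, Finset.mem_map]
    constructor
    · rintro ⟨-, hx⟩
      exact ⟨⟨x, hx⟩, mem_univ _, Fin.ext rfl⟩
    · rintro ⟨y, -, rfl⟩
      exact ⟨mem_univ _, y.isLt⟩
  rw [heq, Finset.card_map, Finset.card_univ, Fintype.card_fin]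

private lemma sum_val_eq {n m : ℕ} (hnm : n - 1 ≤ m) (f : Fin m → Fin n) :
    ∑ i : Fin n, ((univ.filter (fun x => f x = i)).filter (fun x : Fin m => (x : ℕ) < n - 1)).card
      = n - 1 := by
  have h := Finset.card_eq_sum_card_fiberwise
    (s := univ.filter (fun x : Fin m => (x : ℕ) < n - 1)) (t := (univ : Finset (Fin n)))
    (f := f) (fun x _ => mem_univ _)
  rw [card_filter_lt_val hnm] at h
  calc ∑ i : Fin n, ((univ.filter (fun x => f x = i)).filter
          (fun x : Fin m => (x : ℕ) < n - 1)).card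
      = ∑ i : Fin n, ((univ.filter (fun x : Fin m => (x : ℕ) < n - 1)).filter
          (fun x => f x = i)).card := by
        refine Finset.sum_congr rfl fun i _ => ?_
        rw [Finset.filter_comm]
    _ = n - 1 := h.symm

private lemma Q_val_i0 {n m : ℕ} (hn : 2 ≤ n) (hm : n ≤ m) (f : Fin m → Fin n) (i₀ : Fin n)
    (hf : ∀ i : Fin n, i ≠ i₀ →
      ∃ g : Fin m, (g : ℕ) < n - 1 ∧ univ.filter (fun x => f x = i) = {g}) :
    ((univ.filter (fun x => f x = i₀)).filter (fun x : Fin m => (x : ℕ) < n - 1)).card = 0 := by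
  have hs := sum_val_eq (le_trans (Nat.sub_le n 1) hm) f
  have h1 : ∀ i ∈ (univ : Finset (Fin n)).erase i₀,
      ((univ.filter (fun x => f x = i)).filter (fun x : Fin m => (x : ℕ) < n - 1)).card = 1 := by
    intro i hi
    obtain ⟨g, hg, hA⟩ := hf i (Finset.mem_erase.1 hi).1
    rw [hA, Finset.filter_singleton, if_pos hg, Finset.card_singleton]
  have h2 : ∑ i ∈ (univ : Finset (Fin n)).erase i₀,
      ((univ.filter (fun x => f x = i)).filter (fun x : Fin m => (x : ℕ) < n - 1)).card = n - 1 := by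
    rw [Finset.sum_congr rfl h1, Finset.sum_const, smul_eq_mul, mul_one,
      Finset.card_erase_of_mem (mem_univ _), Finset.card_univ, Fintype.card_fin]
  have h3 : (∑ i ∈ (univ : Finset (Fin n)).erase i₀,
        ((univ.filter (fun x => f x = i)).filter (fun x : Fin m => (x : ℕ) < n - 1)).card) +
        ((univ.filter (fun x => f x = i₀)).filter (fun x : Fin m => (x : ℕ) < n - 1)).card =
      ∑ i : Fin n, ((univ.filter (fun x => f x = i)).filter
        (fun x : Fin m => (x : ℕ) < n - 1)).card :=
    Finset.sum_erase_add _ _ (mem_univ i₀)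
  omega

private lemma Q_ne_i0 {n m : ℕ} (hn : 2 ≤ n) (hm : n ≤ m) (f : Fin m → Fin n) (i₀ : Fin n)
    (hf : ∀ i : Fin n, i ≠ i₀ →
      ∃ g : Fin m, (g : ℕ) < n - 1 ∧ univ.filter (fun x => f x = i) = {g}) :
    ∀ g : Fin m, (g : ℕ) < n - 1 → f g ≠ i₀ := by
  intro g hg hfg
  have h0 := Q_val_i0 hn hm f i₀ hf
  rw [Finset.card_eq_zero] at h0
  have hmem : g ∈ (univ.filter (fun x => f x = i₀)).filter (fun x : Fin m => (x : ℕ) < n - 1) := by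
    simp [hfg, hg]
  rw [h0] at hmem
  exact absurd hmem (Finset.notMem_empty g)

private lemma main_iff {n m : ℕ} (hn : 2 ≤ n) (hm : n ≤ m) (f : Fin m → Fin n) :
    (∀ i j : Fin n, ∀ g : Fin m, f g = j →
        (((univ.filter (fun x => f x = j)).erase g).filter (fun x : Fin m => (x : ℕ) < n - 1)).card
          ≤ ((univ.filter (fun x => f x = i)).filter (fun x : Fin m => (x : ℕ) < n - 1)).card) ↔
      ∃ i₀ : Fin n, ∀ i : Fin n, i ≠ i₀ →
        ∃ g : Fin m, (g : ℕ) < n - 1 ∧ univ.filter (fun x => f x = i) = {g} := by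
  have hnm : n - 1 ≤ m := le_trans (Nat.sub_le n 1) hm
  constructor
  · intro hEFX
    have hs := sum_val_eq hnm f
    -- there is an agent with zero value
    have hz : ∃ i₀ : Fin n,
        ((univ.filter (fun x => f x = i₀)).filter (fun x : Fin m => (x : ℕ) < n - 1)).card = 0 := by
      by_contra hc
      push_neg at hc
      have hle : (univ : Finset (Fin n)).card • 1 ≤
          ∑ i : Fin n, ((univ.filter (fun x => f x = i)).filter (fun x : Fin m => (x : ℕ) < n - 1)).card :=
        Finset.card_nsmul_le_sum _ _ _ (fun i _ => Nat.one_le_iff_ne_zero.2 (hc i))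
      rw [Finset.card_univ, Fintype.card_fin, smul_eq_mul, mul_one] at hle
      omega
    obtain ⟨i₀, hz⟩ := hz
    refine ⟨i₀, ?_⟩
    -- every bundle has at most one valuable good
    have hle1 : ∀ j : Fin n,
        ((univ.filter (fun x => f x = j)).filter (fun x : Fin m => (x : ℕ) < n - 1)).card ≤ 1 := by
      intro j
      by_contra hc
      push_neg at hc
      obtain ⟨g, hg, g', hg', hne⟩ := Finset.one_lt_card.1 hc
      rw [Finset.mem_filter, Finset.mem_filter] at hg hg'
      have h1 := hEFX i₀ j g hg.1.2
      have hmem : g' ∈ ((univ.filter (fun x => f x = j)).erase g).filter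
          (fun x : Fin m => (x : ℕ) < n - 1) := by
        rw [Finset.mem_filter, Finset.mem_erase]
        exact ⟨⟨fun h => hne (h ▸ rfl), Finset.mem_filter.2 ⟨mem_univ _, hg'.1.2⟩⟩, hg'.2⟩
      have hpos := Finset.card_pos.2 ⟨g', hmem⟩
      omega
    intro i hi
    -- bundle of i has exactly one valuable good
    have hone : ((univ.filter (fun x => f x = i)).filter (fun x : Fin m => (x : ℕ) < n - 1)).card = 1 := by
      have hiu : i ∈ (univ : Finset (Fin n)).erase i₀ := Finset.mem_erase.2 ⟨hi, mem_univ _⟩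
      have h3 : (∑ j ∈ (univ : Finset (Fin n)).erase i₀,
            ((univ.filter (fun x => f x = j)).filter (fun x : Fin m => (x : ℕ) < n - 1)).card) +
            ((univ.filter (fun x => f x = i₀)).filter (fun x : Fin m => (x : ℕ) < n - 1)).card =
          ∑ j : Fin n, ((univ.filter (fun x => f x = j)).filter
            (fun x : Fin m => (x : ℕ) < n - 1)).card :=
        Finset.sum_erase_add _ _ (mem_univ i₀)
      have h4 : (∑ j ∈ ((univ : Finset (Fin n)).erase i₀).erase i,
            ((univ.filter (fun x => f x = j)).filter (fun x : Fin m => (x : ℕ) < n - 1)).card) +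
            ((univ.filter (fun x => f x = i)).filter (fun x : Fin m => (x : ℕ) < n - 1)).card =
          ∑ j ∈ (univ : Finset (Fin n)).erase i₀,
            ((univ.filter (fun x => f x = j)).filter
              (fun x : Fin m => (x : ℕ) < n - 1)).card :=
        Finset.sum_erase_add _ _ hiu
      have h5 : ∑ j ∈ ((univ : Finset (Fin n)).erase i₀).erase i,
          ((univ.filter (fun x => f x = j)).filter (fun x : Fin m => (x : ℕ) < n - 1)).card ≤
          (((univ : Finset (Fin n)).erase i₀).erase i).card • 1 :=
        Finset.sum_le_card_nsmul _ _ _ (fun j _ => hle1 j)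
      have h6 : (((univ : Finset (Fin n)).erase i₀).erase i).card = n - 2 := by
        rw [Finset.card_erase_of_mem hiu, Finset.card_erase_of_mem (mem_univ _), Finset.card_univ,
          Fintype.card_fin]
        omega
      rw [h6, smul_eq_mul, mul_one] at h5
      have h7 := hle1 i
      omega
    obtain ⟨g, hgeq⟩ := Finset.card_eq_one.1 hone
    have hgmem : g ∈ (univ.filter (fun x => f x = i)).filter (fun x : Fin m => (x : ℕ) < n - 1) := by
      rw [hgeq]; exact Finset.mem_singleton_self g
    rw [Finset.mem_filter, Finset.mem_filter] at hgmem
    refine ⟨g, hgmem.2, ?_⟩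
    rw [Finset.eq_singleton_iff_unique_mem]
    refine ⟨Finset.mem_filter.2 ⟨mem_univ _, hgmem.1.2⟩, ?_⟩
    intro h hh
    by_contra hne
    have hfh : f h = i := (Finset.mem_filter.1 hh).2
    have h1 := hEFX i₀ i h hfh
    have hmem : g ∈ ((univ.filter (fun x => f x = i)).erase h).filter
        (fun x : Fin m => (x : ℕ) < n - 1) := by
      rw [Finset.mem_filter, Finset.mem_erase]
      exact ⟨⟨fun hc => hne (hc ▸ rfl), Finset.mem_filter.2 ⟨mem_univ _, hgmem.1.2⟩⟩, hgmem.2⟩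
    have hpos := Finset.card_pos.2 ⟨g, hmem⟩
    omega
  · rintro ⟨i₀, hf⟩ i j g hg
    have hz := Q_val_i0 hn hm f i₀ hf
    have hrhs : (((univ.filter (fun x => f x = j)).erase g).filter
        (fun x : Fin m => (x : ℕ) < n - 1)).card = 0 := by
      by_cases hj : j = i₀
      · have hsub : ((univ.filter (fun x => f x = j)).erase g).filter
            (fun x : Fin m => (x : ℕ) < n - 1) ⊆
            (univ.filter (fun x => f x = j)).filter (fun x : Fin m => (x : ℕ) < n - 1) :=
          Finset.filter_subset_filter _ (Finset.erase_subset g _)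
        have h2 := Finset.card_le_card hsub
        rw [hj] at h2 ⊢
        omega
      · obtain ⟨g', hg', hA⟩ := hf j hj
        have hgin : g ∈ univ.filter (fun x => f x = j) := by
          rw [Finset.mem_filter]; exact ⟨mem_univ _, hg⟩
        rw [hA, Finset.mem_singleton] at hgin
        rw [hA, hgin, Finset.erase_singleton, Finset.filter_empty, Finset.card_empty]
    rw [hrhs]
    exact Nat.zero_le _

private lemma compl_nonempty {n : ℕ} (hn : 2 ≤ n) (ι : Fin (n - 1) ↪ Fin n) :
    (((univ : Finset (Fin (n - 1))).map ι)ᶜ : Finset (Fin n)).Nonempty := by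
  rw [← Finset.card_pos, Finset.card_compl, Finset.card_map, Finset.card_univ, Fintype.card_fin,
    Fintype.card_fin]
  omega

private def miss {n : ℕ} (hn : 2 ≤ n) (ι : Fin (n - 1) ↪ Fin n) : Fin n :=
  (((univ : Finset (Fin (n - 1))).map ι)ᶜ).min' (compl_nonempty hn ι)

private lemma compl_eq {n : ℕ} (hn : 2 ≤ n) (ι : Fin (n - 1) ↪ Fin n) :
    (((univ : Finset (Fin (n - 1))).map ι)ᶜ : Finset (Fin n)) = {miss hn ι} := by
  have h1 : (((univ : Finset (Fin (n - 1))).map ι)ᶜ : Finset (Fin n)).card = 1 := by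
    rw [Finset.card_compl, Finset.card_map, Finset.card_univ, Fintype.card_fin, Fintype.card_fin]
    omega
  obtain ⟨a, ha⟩ := Finset.card_eq_one.1 h1
  have hmem : miss hn ι ∈ (((univ : Finset (Fin (n - 1))).map ι)ᶜ : Finset (Fin n)) :=
    Finset.min'_mem _ _
  rw [ha] at hmem
  rw [Finset.mem_singleton] at hmem
  rw [ha, hmem]

private lemma miss_notMem {n : ℕ} (hn : 2 ≤ n) (ι : Fin (n - 1) ↪ Fin n) :
    miss hn ι ∉ (univ : Finset (Fin (n - 1))).map ι := by
  have hmem := Finset.min'_mem _ (compl_nonempty hn ι)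
  rwa [Finset.mem_compl] at hmem

private lemma mem_map_of_ne_miss {n : ℕ} (hn : 2 ≤ n) (ι : Fin (n - 1) ↪ Fin n)
    {i : Fin n} (hi : i ≠ miss hn ι) : i ∈ (univ : Finset (Fin (n - 1))).map ι := by
  by_contra hc
  have : i ∈ (((univ : Finset (Fin (n - 1))).map ι)ᶜ : Finset (Fin n)) :=
    Finset.mem_compl.2 hc
  rw [compl_eq hn ι, Finset.mem_singleton] at this
  exact hi this

private lemma restr_inj {n m : ℕ} (hn : 2 ≤ n) (hm : n ≤ m) (f : Fin m → Fin n)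
    (hf : ∃ i₀ : Fin n, ∀ i : Fin n, i ≠ i₀ →
        ∃ g : Fin m, (g : ℕ) < n - 1 ∧ univ.filter (fun x => f x = i) = {g}) :
    Function.Injective
      (fun k : Fin (n - 1) => f ⟨k.1, lt_of_lt_of_le k.2 (le_trans (Nat.sub_le n 1) hm)⟩) := by
  intro k k' hkk
  obtain ⟨i₀, hQ⟩ := hf
  simp only at hkk
  have hk1 : (⟨k.1, lt_of_lt_of_le k.2 (le_trans (Nat.sub_le n 1) hm)⟩ : Fin m).1 < n - 1 := k.2
  have hne := Q_ne_i0 hn hm f i₀ hQ _ hk1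
  obtain ⟨g', hg', hA⟩ := hQ _ hne
  have h1 : (⟨k.1, lt_of_lt_of_le k.2 (le_trans (Nat.sub_le n 1) hm)⟩ : Fin m) ∈
      univ.filter (fun x => f x = f ⟨k.1, lt_of_lt_of_le k.2 (le_trans (Nat.sub_le n 1) hm)⟩) := by
    simp
  have h2 : (⟨k'.1, lt_of_lt_of_le k'.2 (le_trans (Nat.sub_le n 1) hm)⟩ : Fin m) ∈
      univ.filter (fun x => f x = f ⟨k.1, lt_of_lt_of_le k.2 (le_trans (Nat.sub_le n 1) hm)⟩) := by
    simp [hkk]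
  rw [hA, Finset.mem_singleton] at h1 h2
  rw [← h2] at h1
  have hval : (k : ℕ) = (k' : ℕ) := by simpa using h1
  exact Fin.ext hval

private def QEquiv (n m : ℕ) (hn : 2 ≤ n) (hm : n ≤ m) :
    {f : Fin m → Fin n // ∃ i₀ : Fin n, ∀ i : Fin n, i ≠ i₀ →
        ∃ g : Fin m, (g : ℕ) < n - 1 ∧ univ.filter (fun x => f x = i) = {g}} ≃
      (Fin (n - 1) ↪ Fin n) where
  toFun fp := ⟨fun k => fp.1 ⟨k.1, lt_of_lt_of_le k.2 (le_trans (Nat.sub_le n 1) hm)⟩,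
    restr_inj hn hm fp.1 fp.2⟩
  invFun ι := ⟨fun g => if h : (g : ℕ) < n - 1 then ι ⟨g.1, h⟩ else miss hn ι, by
    refine ⟨miss hn ι, fun i hi => ?_⟩
    obtain ⟨k, -, hk⟩ := Finset.mem_map.1 (mem_map_of_ne_miss hn ι hi)
    refine ⟨⟨k.1, lt_of_lt_of_le k.2 (le_trans (Nat.sub_le n 1) hm)⟩, k.2, ?_⟩
    ext x
    simp only [Finset.mem_filter, mem_univ, true_and, Finset.mem_singleton]
    constructor
    · intro hx
      by_cases h : (x : ℕ) < n - 1
      · rw [dif_pos h] at hx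
        have := ι.injective (hx.trans hk.symm)
        have hval : (x : ℕ) = (k : ℕ) := by simpa [Fin.ext_iff] using this
        exact Fin.ext hval
      · rw [dif_neg h] at hx
        exact absurd hx.symm hi
    · rintro rfl
      rw [dif_pos k.2]
      rw [← hk]⟩
  left_inv := by
    rintro ⟨f, hf⟩
    have hm' : n - 1 ≤ m := le_trans (Nat.sub_le n 1) hm
    apply Subtype.ext
    funext g
    let r : Fin (n - 1) ↪ Fin n :=
      ⟨fun k => f ⟨k.1, lt_of_lt_of_le k.2 (le_trans (Nat.sub_le n 1) hm)⟩,
        restr_inj hn hm f hf⟩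
    show (if h : (g : ℕ) < n - 1 then r ⟨g.1, h⟩ else miss hn r) = f g
    by_cases h : (g : ℕ) < n - 1
    · rw [dif_pos h]
      rfl
    · rw [dif_neg h]
      obtain ⟨i₀, hQ⟩ := hf
      have hfg : f g = i₀ := by
        by_contra hc
        obtain ⟨g', hg', hA⟩ := hQ (f g) hc
        have : g ∈ univ.filter (fun x => f x = f g) := by simp
        rw [hA, Finset.mem_singleton] at this
        rw [this] at h
        exact h hg'
      have hi0 : i₀ ∈ (((univ : Finset (Fin (n - 1))).map r)ᶜ : Finset (Fin n)) := by
        rw [Finset.mem_compl]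
        intro hc
        obtain ⟨k, -, hk⟩ := Finset.mem_map.1 hc
        exact Q_ne_i0 hn hm f i₀ hQ _ k.2 hk
      rw [compl_eq hn r, Finset.mem_singleton] at hi0
      rw [← hi0, hfg]
  right_inv := by
    intro ι
    apply Function.Embedding.ext
    intro k
    exact dif_pos k.2

private lemma desc_eq {n : ℕ} (hn : 2 ≤ n) : n.descFactorial (n - 1) = n ! := by
  have e1 : n.descFactorial ((n - 1) + 1) = (n - (n - 1)) * n.descFactorial (n - 1) :=
    Nat.descFactorial_succ n (n - 1)
  have h2 : (n - 1) + 1 = n := by omega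
  have h3 : n - (n - 1) = 1 := by omega
  rw [h2, h3, one_mul, Nat.descFactorial_self] at e1
  exact e1.symm

theorem stmt6 (n m : ℕ) (hn : 2 ≤ n) (hm : n ≤ m)
    (v : Fin m → ℝ)
    (hv : ∀ g : Fin m, v g = if (g : ℕ) < n - 1 then 1 else 0) :
    (∀ f : Fin m → Fin n,
      ((∀ i j : Fin n, ∀ g : Fin m, f g = j →
          ∑ x ∈ univ.filter (fun x => f x = i), v x ≥
            ∑ x ∈ (univ.filter (fun x => f x = j)).erase g, v x) ↔
        ∃ i₀ : Fin n, ∀ i : Fin n, i ≠ i₀ →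
          ∃ g : Fin m, (g : ℕ) < n - 1 ∧ univ.filter (fun x => f x = i) = {g})) ∧
    Fintype.card {f : Fin m → Fin n //
        ∀ i j : Fin n, ∀ g : Fin m, f g = j →
          ∑ x ∈ univ.filter (fun x => f x = i), v x ≥
            ∑ x ∈ (univ.filter (fun x => f x = j)).erase g, v x} = n ! := by
  have hsum : ∀ s : Finset (Fin m),
      ∑ x ∈ s, v x = ((s.filter (fun x : Fin m => (x : ℕ) < n - 1)).card : ℝ) := by
    intro s
    rw [Finset.sum_congr rfl (fun x _ => hv x), Finset.sum_boole]
  have hiff : ∀ f : Fin m → Fin n,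
      (∀ i j : Fin n, ∀ g : Fin m, f g = j →
          ∑ x ∈ univ.filter (fun x => f x = i), v x ≥
            ∑ x ∈ (univ.filter (fun x => f x = j)).erase g, v x) ↔
        ∃ i₀ : Fin n, ∀ i : Fin n, i ≠ i₀ →
          ∃ g : Fin m, (g : ℕ) < n - 1 ∧ univ.filter (fun x => f x = i) = {g} := by
    intro f
    rw [← main_iff hn hm f]
    constructor
    · intro h i j g hg
      have := h i j g hg
      rw [hsum, hsum] at this
      exact_mod_cast this
    · intro h i j g hg
      have := h i j g hg
      rw [hsum, hsum]
      exact_mod_cast this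
  refine ⟨hiff, ?_⟩
  have hcard : Fintype.card {f : Fin m → Fin n //
      ∀ i j : Fin n, ∀ g : Fin m, f g = j →
        ∑ x ∈ univ.filter (fun x => f x = i), v x ≥
          ∑ x ∈ (univ.filter (fun x => f x = j)).erase g, v x} =
      Fintype.card {f : Fin m → Fin n // ∃ i₀ : Fin n, ∀ i : Fin n, i ≠ i₀ →
        ∃ g : Fin m, (g : ℕ) < n - 1 ∧ univ.filter (fun x => f x = i) = {g}} :=
    Fintype.card_congr (Equiv.subtypeEquivRight hiff)
  have hcard2 : Fintype.card {f : Fin m → Fin n // ∃ i₀ : Fin n, ∀ i : Fin n, i ≠ i₀ →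
        ∃ g : Fin m, (g : ℕ) < n - 1 ∧ univ.filter (fun x => f x = i) = {g}} =
      Fintype.card (Fin (n - 1) ↪ Fin n) :=
    Fintype.card_congr (QEquiv n m hn hm)
  rw [hcard, hcard2, Fintype.card_embedding_eq, Fintype.card_fin, Fintype.card_fin]
  exact desc_eq hn
end

section
/- For two agents with additive valuations, consider a partition (A, B) of the goods chosen by agent 1 minimizing |v_1(A) − v_1(B)|, with v_1(A) ≤ v_1(B), followed by agent 2 taking her preferred bundle. The lottery that with probability 1/2 assigns the outcome of agent 1 cutting and agent 2 choosing, and with probability 1/2 the outcome of agent 2 cutting and agent 1 choosing, is envy-free in expectation: each agent's expected value for her own (random) bundle is at least her expected value for the other agent's bundle. -/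
open Finset

theorem stmt7 (m : ℕ) (v₁ v₂ : Fin m → ℝ)
    (C₁ C₂ : Finset (Fin m))
    (hcut1 : ∀ S : Finset (Fin m),
      |∑ g ∈ C₁, v₁ g - ∑ g ∈ C₁ᶜ, v₁ g| ≤ |∑ g ∈ S, v₁ g - ∑ g ∈ Sᶜ, v₁ g|)
    (hchoose1 : ∑ g ∈ C₁ᶜ, v₂ g ≥ ∑ g ∈ C₁, v₂ g)
    (hcut2 : ∀ S : Finset (Fin m),
      |∑ g ∈ C₂, v₂ g - ∑ g ∈ C₂ᶜ, v₂ g| ≤ |∑ g ∈ S, v₂ g - ∑ g ∈ Sᶜ, v₂ g|)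
    (hchoose2 : ∑ g ∈ C₂ᶜ, v₁ g ≥ ∑ g ∈ C₂, v₁ g) :
    (∑ g ∈ C₁, v₁ g + ∑ g ∈ C₂ᶜ, v₁ g) / 2 ≥ (∑ g ∈ C₁ᶜ, v₁ g + ∑ g ∈ C₂, v₁ g) / 2 ∧
    (∑ g ∈ C₁ᶜ, v₂ g + ∑ g ∈ C₂, v₂ g) / 2 ≥ (∑ g ∈ C₁, v₂ g + ∑ g ∈ C₂ᶜ, v₂ g) / 2 := by
  constructor
  · have h := hcut1 C₂
    have h2 : |∑ g ∈ C₂, v₁ g - ∑ g ∈ C₂ᶜ, v₁ g| = ∑ g ∈ C₂ᶜ, v₁ g - ∑ g ∈ C₂, v₁ g := by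
      rw [abs_sub_comm]; exact abs_of_nonneg (by linarith)
    rw [h2] at h
    have := neg_abs_le (∑ g ∈ C₁, v₁ g - ∑ g ∈ C₁ᶜ, v₁ g)
    linarith
  · have h := hcut2 C₁
    have h2 : |∑ g ∈ C₁, v₂ g - ∑ g ∈ C₁ᶜ, v₂ g| = ∑ g ∈ C₁ᶜ, v₂ g - ∑ g ∈ C₁, v₂ g := by
      rw [abs_sub_comm]; exact abs_of_nonneg (by linarith)
    rw [h2] at h
    have := neg_abs_le (∑ g ∈ C₂, v₂ g - ∑ g ∈ C₂ᶜ, v₂ g)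
    linarith
end

section
/- Consider two agents with weights w_1 = 2, w_2 = 5, and m = 7 identical goods, where v_1(S) = |S| (additive) and v_2(S) = min{2, |S|} (budget-additive, hence submodular). Then no allocation (A_1, A_2) of all 7 goods satisfies WWEFX: there exist agents i ≠ j and a good g ∈ A_j such that both v_i(A_i)/w_i < v_i(A_j \ {g})/w_j and v_i(A_i ∪ {g})/w_i < v_i(A_j)/w_j. -/
open Finset

theorem stmt8
    (v : Fin 2 → Finset (Fin 7) → ℝ)
    (hv0 : ∀ S, v 0 S = S.card)
    (hv1 : ∀ S, v 1 S = min 2 (S.card : ℝ))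
    (w : Fin 2 → ℝ) (hw0 : w 0 = 2) (hw1 : w 1 = 5) :
    ∀ A : Finset (Fin 7),
      ∃ i j : Fin 2, i ≠ j ∧ ∃ g ∈ (if j = 0 then A else Aᶜ),
        v i (if i = 0 then A else Aᶜ) / w i <
          v i ((if j = 0 then A else Aᶜ).erase g) / w j ∧
        v i (insert g (if i = 0 then A else Aᶜ)) / w i <
          v i (if j = 0 then A else Aᶜ) / w j := by
  intro A
  have hc : Aᶜ.card = 7 - A.card := by
    rw [Finset.card_compl]; simp
  have hAle : A.card ≤ 7 := by
    simpa using Finset.card_le_card (Finset.subset_univ A)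
  by_cases h : A.card ≤ 1
  · refine ⟨0, 1, by decide, ?_⟩
    have hne : Aᶜ.Nonempty := by
      rw [← Finset.card_pos, hc]; omega
    obtain ⟨g, hg⟩ := hne
    have hgA : g ∉ A := Finset.mem_compl.mp hg
    refine ⟨g, ?_, ?_, ?_⟩
    · simpa using hg
    · rw [if_neg (by decide : (1 : Fin 2) ≠ 0), if_pos rfl,
        hv0, hv0, hw0, hw1, Finset.card_erase_of_mem hg, hc]
      have h0 : 0 ≤ A.card := Nat.zero_le _
      interval_cases h : A.card <;> norm_num [h]
    · rw [if_neg (by decide : (1 : Fin 2) ≠ 0), if_pos rfl,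
        hv0, hv0, hw0, hw1, Finset.card_insert_of_notMem hgA, hc]
      have h0 : 0 ≤ A.card := Nat.zero_le _
      interval_cases h : A.card <;> norm_num [h]
  · push_neg at h
    refine ⟨1, 0, by decide, ?_⟩
    have hne : A.Nonempty := by rw [← Finset.card_pos]; omega
    obtain ⟨g, hg⟩ := hne
    have hgc : g ∉ Aᶜ := by simpa using hg
    refine ⟨g, by simpa using hg, ?_, ?_⟩
    · rw [if_pos rfl, if_neg (by decide : (1 : Fin 2) ≠ 0),
        hv1, hv1, hw0, hw1, Finset.card_erase_of_mem hg]
      have h1 : min (2:ℝ) (Aᶜ.card : ℝ) ≤ 2 := min_le_left _ _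
      have h2 : (1:ℝ) ≤ min (2:ℝ) ((A.card - 1 : ℕ) : ℝ) := by
        refine le_min (by norm_num) ?_
        have : (1 : ℕ) ≤ A.card - 1 := by omega
        exact_mod_cast this
      linarith
    · rw [if_pos rfl, if_neg (by decide : (1 : Fin 2) ≠ 0),
        hv1, hv1, hw0, hw1, Finset.card_insert_of_notMem hgc]
      have h1 : min (2:ℝ) ((Aᶜ.card + 1 : ℕ) : ℝ) ≤ 2 := min_le_left _ _
      have h2 : min (2:ℝ) ((A.card : ℕ) : ℝ) = 2 := by
        refine min_eq_left ?_
        have : (2 : ℕ) ≤ A.card := h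
        exact_mod_cast this
      push_cast at h1 ⊢; rw [h2]; linarith
end

section
/- Under binary additive valuations with n = 2 agents, arbitrary positive weights, and m ≥ 3 goods, there exists an instance with at most one WEFX allocation. Specifically, with weights w_1 = 1−ε, w_2 = ε (for suitable small ε > 0), v_1(g_j) = 1 for all j, and v_2(g_1) = 1, v_2(g_j) = 0 for j ≥ 2, the unique WEFX allocation is (G \ {g_1}, {g_1}). -/
open Finset

theorem stmt10 (m : ℕ) (hm : 3 ≤ m) (ε : ℝ) (hε : 0 < ε) (hε1 : ε < 1)
    (hεm : (m : ℝ) < (1 - ε) / ε)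
    (v : Fin 2 → Fin m → ℝ)
    (hv1 : ∀ g : Fin m, v 0 g = 1)
    (hv2 : ∀ g : Fin m, v 1 g = if g = (⟨0, by omega⟩ : Fin m) then 1 else 0)
    (w : Fin 2 → ℝ) (hw0 : w 0 = 1 - ε) (hw1 : w 1 = ε) :
    ∀ A : Finset (Fin m),
      ((∀ i j : Fin 2, ∀ g ∈ (if j = 0 then A else Aᶜ),
          (∑ x ∈ (if i = 0 then A else Aᶜ), v i x) / w i ≥
            (∑ x ∈ (if j = 0 then A else Aᶜ).erase g, v i x) / w j) ↔
        A = ({(⟨0, by omega⟩ : Fin m)}ᶜ : Finset (Fin m))) := by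
  intro A
  set g0 : Fin m := ⟨0, by omega⟩ with hg0
  have hε1' : (0:ℝ) < 1 - ε := by linarith
  have hεm' : (m : ℝ) * ε < 1 - ε := (lt_div_iff₀ hε).mp hεm
  have s0 : ∀ S : Finset (Fin m), ∑ x ∈ S, v 0 x = (S.card : ℝ) := by
    intro S; simp [hv1]
  have s1 : ∀ S : Finset (Fin m), ∑ x ∈ S, v 1 x = if g0 ∈ S then (1:ℝ) else 0 := by
    intro S
    simp only [hv2, ← hg0]
    exact Finset.sum_ite_eq' S g0 (fun _ => (1:ℝ))
  have hmcard : Fintype.card (Fin m) = m := Fintype.card_fin m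
  constructor
  · intro h
    suffices hc : Aᶜ = {g0} by
      rw [← compl_compl A, hc]
    by_contra hne
    by_cases hg0A : g0 ∈ A
    · -- g0 ∈ A
      by_cases hA1 : ∃ g ∈ A, g ≠ g0
      · obtain ⟨g, hgA, hgne⟩ := hA1
        have := h 1 0 g (by simpa using hgA)
        simp only [reduceIte, if_pos rfl, if_true, if_false, if_neg (by decide : (1:Fin 2) ≠ 0), hw0, hw1, s1] at this
        rw [if_neg (by simp [hg0A]), if_pos (Finset.mem_erase.mpr ⟨Ne.symm hgne, hg0A⟩)] at this
        have : (0:ℝ)/ε ≥ 1/(1-ε) := this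
        rw [zero_div] at this
        nlinarith [div_pos (by norm_num : (0:ℝ) < 1) hε1']
      · -- A = {g0}
        push_neg at hA1
        have hAeq : A = {g0} := by
          apply Finset.eq_singleton_iff_unique_mem.mpr
          exact ⟨hg0A, fun x hx => hA1 x hx⟩
        have hcardc : Aᶜ.card = m - 1 := by
          rw [Finset.card_compl, hmcard, hAeq, Finset.card_singleton]
        have hne' : Aᶜ.Nonempty := by
          rw [← Finset.card_pos, hcardc]; omega
        obtain ⟨g, hg⟩ := hne'
        have := h 0 1 g (by simpa using hg)
        simp only [reduceIte, if_pos rfl, if_true, if_false, if_neg (by decide : (1:Fin 2) ≠ 0), hw0, hw1, s0] at this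
        rw [Finset.card_erase_of_mem hg, hcardc, hAeq, Finset.card_singleton] at this
        have hge : ((m - 1 - 1 : ℕ) : ℝ) / ε ≤ ((1:ℕ):ℝ)/(1-ε) := this
        rw [Nat.cast_one] at hge
        have hcast : ((m - 1 - 1 : ℕ) : ℝ) = (m:ℝ) - 2 := by
          have : (m - 1 - 1 : ℕ) = m - 2 := by omega
          rw [this]; push_cast [Nat.cast_sub (by omega : 2 ≤ m)]; ring
        rw [hcast] at hge
        have hm3 : (3:ℝ) ≤ m := by exact_mod_cast hm
        rw [div_le_div_iff₀ hε hε1'] at hge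
        nlinarith
    · -- g0 ∈ Aᶜ, and Aᶜ ≠ {g0}, so card Aᶜ ≥ 2
      have hg0c : g0 ∈ Aᶜ := Finset.mem_compl.mpr hg0A
      have hk2 : 2 ≤ Aᶜ.card := by
        by_contra hlt
        push_neg at hlt
        have h1 : Aᶜ.card = 1 := by
          have := Finset.card_pos.mpr ⟨g0, hg0c⟩; omega
        obtain ⟨x, hx⟩ := Finset.card_eq_one.mp h1
        apply hne
        rw [hx] at hg0c ⊢
        simp only [Finset.mem_singleton] at hg0c
        rw [hg0c]
      have := h 0 1 g0 (by simpa using hg0c)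
      simp only [reduceIte, if_pos rfl, if_true, if_false, if_neg (by decide : (1:Fin 2) ≠ 0), hw0, hw1, s0] at this
      rw [Finset.card_erase_of_mem hg0c] at this
      have hge : ((Aᶜ.card - 1 : ℕ) : ℝ) / ε ≤ ((A.card : ℕ) : ℝ)/(1-ε) := this
      have hcardA : A.card = m - Aᶜ.card := by
        have := Finset.card_compl (s := A) (α := Fin m)
        omega
      set k := Aᶜ.card with hk
      have hkm : k ≤ m := by
        have := Finset.card_le_card (Finset.subset_univ Aᶜ)
        simpa [hmcard] using this
      have hc1 : ((k - 1 : ℕ) : ℝ) = (k:ℝ) - 1 := by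
        push_cast [Nat.cast_sub (by omega : 1 ≤ k)]; ring
      have hc2 : ((m - k : ℕ) : ℝ) = (m:ℝ) - k := by
        push_cast [Nat.cast_sub hkm]; ring
      rw [hc1, hcardA, hc2] at hge
      rw [div_le_div_iff₀ hε hε1'] at hge
      have hk2' : (2:ℝ) ≤ k := by exact_mod_cast hk2
      have hk0 : (0:ℝ) ≤ k := by positivity
      nlinarith
  · intro hA
    subst hA
    have hAc : ({g0}ᶜ : Finset (Fin m))ᶜ = {g0} := compl_compl _
    have hcard : ({g0}ᶜ : Finset (Fin m)).card = m - 1 := by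
      rw [Finset.card_compl, hmcard, Finset.card_singleton]
    have hg0notin : g0 ∉ ({g0}ᶜ : Finset (Fin m)) := by simp
    have hm1 : (1:ℝ) ≤ ((m-1 : ℕ):ℝ) := by
      have : 1 ≤ m - 1 := by omega
      exact_mod_cast this
    intro i j g hg
    fin_cases i <;> fin_cases j <;>
      simp only [Fin.mk_zero, Fin.mk_one, if_neg (show (1:Fin 2) ≠ 0 by decide), reduceIte, hAc, hw0, hw1, s0, s1] at hg ⊢
    · -- i=0 j=0
      have hle : ((((({g0}ᶜ : Finset (Fin m)).erase g).card) : ℝ)) ≤ ((({g0}ᶜ : Finset (Fin m)).card : ℝ)) :=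
        Nat.cast_le.mpr (Finset.card_le_card (Finset.erase_subset _ _))
      exact (div_le_div_iff_of_pos_right hε1').mpr hle
    · -- i=0 j=1
      simp only [Finset.mem_singleton] at hg
      subst hg
      rw [Finset.erase_singleton, Finset.card_empty, Nat.cast_zero, zero_div]
      positivity
    · -- i=1 j=0
      rw [if_pos (Finset.mem_singleton_self g0),
        if_neg (fun hmem => hg0notin (Finset.mem_of_mem_erase hmem)), zero_div]
      positivity
    · -- i=1 j=1
      simp only [Finset.mem_singleton] at hg
      subst hg
      rw [if_pos (Finset.mem_singleton_self g0), Finset.erase_singleton,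
        if_neg (Finset.notMem_empty g0), zero_div]
      positivity
end

section
/- For two agents with monotone valuations, let A* maximize f(A) = min(v_1(A) − w_1, 0) + min(v_2(G\A) − w_2, 0) over subsets A ⊆ G (ties broken by larger |A|), where weights satisfy w_1 + w_2 = 1 and valuations are normalized so v_1(G) = v_2(G) = 1. If there is a good g_1 ∈ G\A* with v_1(g_1) > v_2(g_1), then v_1(A*) + v_1(g_1) ≥ w_1. -/
open Finset

theorem stmt11 (m : ℕ) (v₁ v₂ : Fin m → ℝ)
    (hv₁ : ∀ g, 0 ≤ v₁ g) (hv₂ : ∀ g, 0 ≤ v₂ g)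
    (hsum1 : ∑ g, v₁ g = 1) (hsum2 : ∑ g, v₂ g = 1)
    (w₁ w₂ : ℝ) (hw₁ : 0 < w₁) (hw₂ : 0 < w₂) (hw : w₁ + w₂ = 1)
    (A : Finset (Fin m))
    (hmax : ∀ S : Finset (Fin m),
      min (∑ g ∈ S, v₁ g - w₁) 0 + min (∑ g ∈ Sᶜ, v₂ g - w₂) 0 ≤
        min (∑ g ∈ A, v₁ g - w₁) 0 + min (∑ g ∈ Aᶜ, v₂ g - w₂) 0)
    (hcard : ∀ S : Finset (Fin m),
      min (∑ g ∈ S, v₁ g - w₁) 0 + min (∑ g ∈ Sᶜ, v₂ g - w₂) 0 =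
        min (∑ g ∈ A, v₁ g - w₁) 0 + min (∑ g ∈ Aᶜ, v₂ g - w₂) 0 → S.card ≤ A.card)
    (g₁ : Fin m) (hg₁ : g₁ ∈ Aᶜ) (hgv : v₂ g₁ < v₁ g₁) :
    w₁ ≤ ∑ g ∈ A, v₁ g + v₁ g₁ := by
  by_contra h
  push_neg at h
  have hg₁A : g₁ ∉ A := by simpa using hg₁
  have hS1 : ∑ g ∈ insert g₁ A, v₁ g = v₁ g₁ + ∑ g ∈ A, v₁ g :=
    Finset.sum_insert hg₁A
  have hSc : (insert g₁ A)ᶜ = Aᶜ.erase g₁ := by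
    ext x; simp [Finset.mem_erase, and_comm]
  have hS2 : ∑ g ∈ (insert g₁ A)ᶜ, v₂ g = ∑ g ∈ Aᶜ, v₂ g - v₂ g₁ := by
    rw [hSc, Finset.sum_erase_eq_sub hg₁]
  have key := hmax (insert g₁ A)
  rw [hS1, hS2] at key
  have hA1 : ∑ g ∈ A, v₁ g - w₁ < 0 := by
    have := hv₁ g₁; linarith
  have hS1' : v₁ g₁ + ∑ g ∈ A, v₁ g - w₁ < 0 := by linarith
  rw [min_eq_left hA1.le, min_eq_left hS1'.le] at key
  have h2 : min (∑ g ∈ Aᶜ, v₂ g - v₂ g₁ - w₂) 0 ≥ min (∑ g ∈ Aᶜ, v₂ g - w₂) 0 - v₂ g₁ := by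
    have := hv₂ g₁
    rcases le_or_gt (∑ g ∈ Aᶜ, v₂ g - w₂) 0 with h' | h'
    · rw [min_eq_left h']
      have : ∑ g ∈ Aᶜ, v₂ g - v₂ g₁ - w₂ ≤ 0 := by linarith
      rw [min_eq_left this]; linarith
    · rw [min_eq_right h'.le]
      rcases le_or_gt (∑ g ∈ Aᶜ, v₂ g - v₂ g₁ - w₂) 0 with h'' | h''
      · rw [min_eq_left h'']; linarith
      · rw [min_eq_right h''.le]; linarith
  linarith
end

section
/- For two agents with additive valuations and arbitrary positive weights w_1, w_2, there always exists a 1/4-WEFX allocation: a partition (A_1, A_2) of G such that for all agents i ≠ j and all g ∈ A_j, v_i(A_i)/w_i ≥ (1/4)·v_i(A_j \ {g})/w_j. -/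
open Finset

private lemma wefx_form {X Y w0 w1 : ℝ} (hw0 : 0 < w0) (hw1 : 0 < w1)
    (h : w0 * X ≤ 4 * w1 * Y) : Y / w0 ≥ (1/4) * (X / w1) := by
  rw [ge_iff_le, show (1/4 : ℝ) * (X / w1) = X / (4 * w1) by ring,
    div_le_div_iff₀ (by positivity) hw0]
  nlinarith

private lemma wefx_arith0 {w0 w1 T sA0 X : ℝ} (hw0 : 0 < w0)
    (hthr : w0 * T ≤ sA0 * (w0 + 4 * w1)) (hX : X ≤ T - sA0) :
    w0 * X ≤ 4 * w1 * sA0 := by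
  nlinarith [mul_le_mul_of_nonneg_left hX hw0.le]

private lemma wefx_arith1 {w0 w1 T a' vl sA1 sB0 sB1 : ℝ}
    (hw0 : 0 < w0) (hw1 : 0 < w1) (hle : w0 ≤ w1) (hT : 0 < T)
    (hf2 : a' * (w0 + 4 * w1) < w0 * T) (hf3 : 4 * w1 * vl < w0 * T)
    (hB0eq : sB0 = T - (a' + vl))
    (hcross : sA1 * sB0 ≤ (a' + vl) * sB1)
    (hsB1nn : 0 ≤ sB1) (hsA1nn : 0 ≤ sA1) :
    w1 * sA1 ≤ 4 * w0 * sB1 := by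
  have hD : (0:ℝ) < w0 + 4 * w1 := by linarith
  have hC : (0:ℝ) < 4 * w1 * (w0 + 4 * w1) := by positivity
  have hN : (0:ℝ) < 16 * w1 ^ 2 - 4 * w0 * w1 - w0 ^ 2 := by
    nlinarith [mul_nonneg (sub_nonneg.mpr hle) hw1.le,
      mul_nonneg (sub_nonneg.mpr hle) (by linarith : (0:ℝ) ≤ w0 + w1), mul_pos hw1 hw1]
  have g1 : T * (16 * w1 ^ 2 - 4 * w0 * w1 - w0 ^ 2) < sB0 * (4 * w1 * (w0 + 4 * w1)) := by
    nlinarith [mul_lt_mul_of_pos_left hf2 (show (0:ℝ) < 4 * w1 by linarith),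
      mul_lt_mul_of_pos_left hf3 hD]
  have g2 : (a' + vl) * (4 * w1 * (w0 + 4 * w1)) < w0 * T * (w0 + 8 * w1) := by
    nlinarith [mul_lt_mul_of_pos_left hf2 (show (0:ℝ) < 4 * w1 by linarith),
      mul_lt_mul_of_pos_left hf3 hD]
  have hNpos : (0:ℝ) < T * (16 * w1 ^ 2 - 4 * w0 * w1 - w0 ^ 2) := mul_pos hT hN
  have hB0pos : 0 < sB0 := by nlinarith [hNpos.trans g1, hC]
  have hQ : (0:ℝ) ≤ 56 * w1 ^ 2 - 17 * w0 * w1 - 4 * w0 ^ 2 := by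
    nlinarith [mul_nonneg (sub_nonneg.mpr hle) hw1.le,
      mul_nonneg (sub_nonneg.mpr hle) (by linarith : (0:ℝ) ≤ w0 + w1), mul_pos hw1 hw1]
  have step1 : w1 * sB1 * ((a' + vl) * (4 * w1 * (w0 + 4 * w1))) ≤
      w1 * sB1 * (w0 * T * (w0 + 8 * w1)) :=
    mul_le_mul_of_nonneg_left g2.le (by positivity)
  have step2 : (4 * w0 * sB1) * (T * (16 * w1 ^ 2 - 4 * w0 * w1 - w0 ^ 2)) ≤
      (4 * w0 * sB1) * (sB0 * (4 * w1 * (w0 + 4 * w1))) :=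
    mul_le_mul_of_nonneg_left g1.le (by positivity)
  have step3 : w1 * sB1 * (w0 * T * (w0 + 8 * w1)) ≤
      (4 * w0 * sB1) * (T * (16 * w1 ^ 2 - 4 * w0 * w1 - w0 ^ 2)) := by
    nlinarith [mul_nonneg (mul_nonneg (mul_nonneg hsB1nn hT.le) hw0.le) hQ]
  have key2 : (w1 * ((a' + vl) * sB1)) * (4 * w1 * (w0 + 4 * w1)) ≤
      ((4 * w0) * (sB0 * sB1)) * (4 * w1 * (w0 + 4 * w1)) := by
    nlinarith [step1, step2, step3]
  have key3 : w1 * ((a' + vl) * sB1) ≤ (4 * w0) * (sB0 * sB1) :=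
    le_of_mul_le_mul_right key2 hC
  have hw1cross : w1 * (sA1 * sB0) ≤ w1 * ((a' + vl) * sB1) :=
    mul_le_mul_of_nonneg_left hcross hw1.le
  have final : (w1 * sA1) * sB0 ≤ (4 * w0 * sB1) * sB0 := by nlinarith [key3, hw1cross]
  exact le_of_mul_le_mul_right final hB0pos

private lemma wefx_main (m : ℕ) (v0 v1 : Fin m → ℝ) (h0 : ∀ g, 0 ≤ v0 g) (h1 : ∀ g, 0 ≤ v1 g)
    (w0 w1 : ℝ) (hw0 : 0 < w0) (hw1 : 0 < w1) (hle : w0 ≤ w1) :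
    ∃ A : Finset (Fin m),
      (∀ g ∈ Aᶜ, (∑ x ∈ A, v0 x) / w0 ≥ (1/4) * ((∑ x ∈ Aᶜ.erase g, v0 x) / w1)) ∧
      (∀ g ∈ A, (∑ x ∈ Aᶜ, v1 x) / w1 ≥ (1/4) * ((∑ x ∈ A.erase g, v1 x) / w0)) := by
  classical
  set T : ℝ := ∑ g, v0 g with hTdef
  by_cases hT : T ≤ 0
  · -- all v0 are zero
    have hT0 : T = 0 := le_antisymm hT (Finset.sum_nonneg (fun i _ => h0 i))
    have hz : ∀ g, v0 g = 0 := fun g =>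
      (Finset.sum_eq_zero_iff_of_nonneg (fun i _ => h0 i)).mp hT0 g (mem_univ g)
    refine ⟨∅, ?_, ?_⟩
    · intro g hg
      apply wefx_form hw0 hw1
      have h5 : ∑ x ∈ (∅ : Finset (Fin m))ᶜ.erase g, v0 x = 0 :=
        Finset.sum_eq_zero (fun x _ => hz x)
      rw [h5]
      simp
    · intro g hg; simp at hg
  · push_neg at hT
    by_cases hsing : ∃ g : Fin m, ∀ h ∈ ({g}ᶜ : Finset (Fin m)),
        w0 * (∑ x ∈ ({g}ᶜ : Finset (Fin m)).erase h, v0 x) ≤ 4 * w1 * v0 g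
    · obtain ⟨g0, hg0⟩ := hsing
      refine ⟨{g0}, ?_, ?_⟩
      · intro g hg
        apply wefx_form hw0 hw1
        rw [Finset.sum_singleton]
        exact hg0 g hg
      · intro g hg
        rw [Finset.mem_singleton] at hg
        subst hg
        apply wefx_form hw1 hw0
        rw [Finset.erase_singleton]
        simp only [Finset.sum_empty, mul_zero]
        have h6 : 0 ≤ ∑ x ∈ ({g} : Finset (Fin m))ᶜ, v1 x :=
          Finset.sum_nonneg (fun i _ => h1 i)
        nlinarith
    · push_neg at hsing
      -- every good is v0-small: 4*w1*v0 g < w0*T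
      have hsmall : ∀ g : Fin m, 4 * w1 * v0 g < w0 * T := by
        intro g
        obtain ⟨h, hmem, hlt⟩ := hsing g
        have hsub : ∑ x ∈ ({g}ᶜ : Finset (Fin m)).erase h, v0 x ≤ T := by
          apply Finset.sum_le_sum_of_subset_of_nonneg (Finset.subset_univ _)
          intro i _ _; exact h0 i
        calc 4 * w1 * v0 g < w0 * (∑ x ∈ ({g}ᶜ : Finset (Fin m)).erase h, v0 x) := hlt
          _ ≤ w0 * T := by nlinarith
      -- sort by key κ
      set κ : Fin m → ℝ := fun g => v1 g / (v0 g + v1 g) with hκdef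
      have hkey : ∀ a b : Fin m, κ a ≤ κ b → v1 a * v0 b ≤ v0 a * v1 b := by
        intro a b hab
        by_cases ha : v0 a + v1 a = 0
        · have hva : v1 a = 0 := by have := h0 a; have := h1 a; linarith
          rw [hva, zero_mul]
          exact mul_nonneg (h0 a) (h1 b)
        · by_cases hb : v0 b + v1 b = 0
          · have hvb : v0 b = 0 := by have := h0 b; have := h1 b; linarith
            rw [hvb, mul_zero]
            exact mul_nonneg (h0 a) (h1 b)
          · have hap : 0 < v0 a + v1 a :=
              lt_of_le_of_ne (by have := h0 a; have := h1 a; linarith) (Ne.symm ha)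
            have hbp : 0 < v0 b + v1 b :=
              lt_of_le_of_ne (by have := h0 b; have := h1 b; linarith) (Ne.symm hb)
            have hcr := (div_le_div_iff₀ hap hbp).mp hab
            nlinarith
      set ble : Fin m → Fin m → Bool := fun a b => decide (κ a ≤ κ b) with hbledef
      set l : List (Fin m) := (List.finRange m).mergeSort ble with hldef
      have hperm : l.Perm (List.finRange m) := List.mergeSort_perm _ _
      have hnd : l.Nodup := hperm.nodup_iff.mpr (List.nodup_finRange m)
      have hlen : l.length = m := by rw [hperm.length_eq, List.length_finRange]
      have hsorted : l.Pairwise (fun a b => κ a ≤ κ b) := by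
        have h := List.pairwise_mergeSort (le := ble)
          (fun a b c hab hbc => by
            simp only [hbledef, decide_eq_true_eq] at *; exact le_trans hab hbc)
          (fun a b => by
            simp only [hbledef, Bool.or_eq_true, decide_eq_true_eq]
            exact le_total (κ a) (κ b))
          (List.finRange m)
        refine List.Pairwise.imp ?_ h
        intro a b hab
        simpa [hbledef] using hab
      set S0 : ℕ → ℝ := fun k => ((l.take k).map v0).sum with hS0def
      have hsum_all : (l.map v0).sum = T := by
        rw [hTdef, Fin.sum_univ_def]
        exact (hperm.map v0).sum_eq
      have hD : 0 < w0 + 4 * w1 := by linarith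
      have hSm : w0 * T / (w0 + 4 * w1) ≤ S0 m := by
        have htl : l.take m = l := List.take_of_length_le (le_of_eq hlen)
        rw [hS0def]
        simp only [htl, hsum_all]
        rw [div_le_iff₀ hD]
        nlinarith
      have hex : ∃ k, w0 * T / (w0 + 4 * w1) ≤ S0 k := ⟨m, hSm⟩
      set k : ℕ := Nat.find hex with hkdef
      have hk : w0 * T / (w0 + 4 * w1) ≤ S0 k := Nat.find_spec hex
      have hk0 : k ≠ 0 := by
        intro h
        have h1' : S0 0 = 0 := by simp [hS0def]
        have h2 := hk
        rw [h, h1'] at h2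
        have h3 : 0 < w0 * T / (w0 + 4 * w1) := div_pos (by positivity) hD
        linarith
      have hkm : k ≤ m := Nat.find_le hSm
      have hkprev : ¬ (w0 * T / (w0 + 4 * w1) ≤ S0 (k - 1)) := Nat.find_min hex (by omega)
      push_neg at hkprev
      set A : Finset (Fin m) := (l.take k).toFinset with hAdef
      have hndtake : (l.take k).Nodup := (List.take_sublist k l).nodup hnd
      have hnddrop : (l.drop k).Nodup := (List.drop_sublist k l).nodup hnd
      have hsA0 : ∑ x ∈ A, v0 x = S0 k := by
        rw [hAdef, List.sum_toFinset _ hndtake]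
      have hcompl : Aᶜ = (l.drop k).toFinset := by
        ext g
        have hg : g ∈ l := hperm.mem_iff.mpr (List.mem_finRange g)
        have hsplit : l.take k ++ l.drop k = l := List.take_append_drop k l
        have hdisj : ∀ x, x ∈ l.take k → x ∉ l.drop k := by
          have hnd2 : (l.take k ++ l.drop k).Nodup := by rw [hsplit]; exact hnd
          intro x hx hx'
          exact (List.disjoint_of_nodup_append hnd2) hx hx'
        simp only [Finset.mem_compl, hAdef, List.mem_toFinset]
        constructor
        · intro hgt
          have hg2 : g ∈ l.take k ++ l.drop k := by rw [hsplit]; exact hg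
          rcases List.mem_append.mp hg2 with h | h
          · exact absurd h hgt
          · exact h
        · intro hgd hgt
          exact hdisj g hgt hgd
      have hsB0 : ∑ x ∈ Aᶜ, v0 x = T - S0 k := by
        rw [hcompl, List.sum_toFinset _ hnddrop]
        have hsp : ((l.take k).map v0).sum + ((l.drop k).map v0).sum = T := by
          rw [← List.sum_append, ← List.map_append, List.take_append_drop, hsum_all]
        rw [hS0def]
        dsimp only
        linarith [hsp]
      -- the marginal good
      have hidx : k - 1 < l.length := by omega
      set ℓ : Fin m := l.get ⟨k - 1, hidx⟩ with hℓdef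
      have htake : l.take k = l.take (k-1) ++ [ℓ] := by
        have h1' : k = (k - 1) + 1 := by omega
        rw [h1', List.take_succ]
        congr 1
        rw [List.getElem?_eq_getElem hidx]
        rfl
      have hS0k : S0 k = S0 (k-1) + v0 ℓ := by
        rw [hS0def]
        dsimp only
        rw [htake]
        simp [List.sum_append]
      have ha'nn : 0 ≤ S0 (k-1) := by
        rw [hS0def]
        apply List.sum_nonneg
        intro x hx
        obtain ⟨y, _, rfl⟩ := List.mem_map.mp hx
        exact h0 y
      -- cross inequality between A and Aᶜ
      have hAB : ∀ a ∈ A, ∀ b ∈ Aᶜ, κ a ≤ κ b := by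
        intro a ha b hb
        rw [hAdef, List.mem_toFinset] at ha
        rw [hcompl, List.mem_toFinset] at hb
        have hsp : (l.take k ++ l.drop k).Pairwise (fun a b => κ a ≤ κ b) := by
          rw [List.take_append_drop]; exact hsorted
        exact (List.pairwise_append.mp hsp).2.2 a ha b hb
      have hcross : (∑ x ∈ A, v1 x) * (∑ x ∈ Aᶜ, v0 x) ≤
          (∑ x ∈ A, v0 x) * (∑ x ∈ Aᶜ, v1 x) := by
        rw [Finset.sum_mul_sum, Finset.sum_mul_sum]
        apply Finset.sum_le_sum
        intro a ha
        apply Finset.sum_le_sum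
        intro b hb
        exact hkey a b (hAB a ha b hb)
      -- numeric work
      have f2 : S0 (k-1) * (w0 + 4 * w1) < w0 * T := (lt_div_iff₀ hD).mp hkprev
      have f3 : 4 * w1 * v0 ℓ < w0 * T := hsmall ℓ
      have hthr : w0 * T ≤ (∑ x ∈ A, v0 x) * (w0 + 4 * w1) := by
        rw [hsA0]; exact (div_le_iff₀ hD).mp hk
      have hA0eq : (∑ x ∈ A, v0 x) = S0 (k-1) + v0 ℓ := by rw [hsA0, hS0k]
      have hB0eq : (∑ x ∈ Aᶜ, v0 x) = T - (S0 (k-1) + v0 ℓ) := by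
        rw [hsB0, hS0k]
      have hsB1nn : 0 ≤ ∑ x ∈ Aᶜ, v1 x := Finset.sum_nonneg (fun i _ => h1 i)
      have hsA1nn : 0 ≤ ∑ x ∈ A, v1 x := Finset.sum_nonneg (fun i _ => h1 i)
      have goalC1 : w1 * (∑ x ∈ A, v1 x) ≤ 4 * w0 * (∑ x ∈ Aᶜ, v1 x) := by
        apply wefx_arith1 hw0 hw1 hle hT f2 f3 hB0eq _ hsB1nn hsA1nn
        rw [← hA0eq]
        exact hcross
      refine ⟨A, ?_, ?_⟩
      · intro g hg
        apply wefx_form hw0 hw1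
        apply wefx_arith0 hw0 hthr
        have hsub : ∑ x ∈ Aᶜ.erase g, v0 x ≤ ∑ x ∈ Aᶜ, v0 x :=
          Finset.sum_le_sum_of_subset_of_nonneg (Finset.erase_subset _ _) (fun i _ _ => h0 i)
        rw [hB0eq, ← hA0eq] at hsub
        exact hsub
      · intro g hg
        apply wefx_form hw1 hw0
        have hsub : ∑ x ∈ A.erase g, v1 x ≤ ∑ x ∈ A, v1 x :=
          Finset.sum_le_sum_of_subset_of_nonneg (Finset.erase_subset _ _) (fun i _ _ => h1 i)
        nlinarith [mul_le_mul_of_nonneg_left hsub hw1.le, goalC1]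

theorem stmt13 (m : ℕ) (v : Fin 2 → Fin m → ℝ) (hv : ∀ i g, 0 ≤ v i g)
    (w : Fin 2 → ℝ) (hw : ∀ i, 0 < w i) :
    ∃ A : Finset (Fin m), ∀ i j : Fin 2, i ≠ j → ∀ g ∈ (if j = 0 then A else Aᶜ),
      (∑ x ∈ (if i = 0 then A else Aᶜ), v i x) / w i ≥
        (1 / 4) * ((∑ x ∈ (if j = 0 then A else Aᶜ).erase g, v i x) / w j) := by
  rcases le_total (w 0) (w 1) with h | h
  · obtain ⟨A, hA0, hA1⟩ := wefx_main m (v 0) (v 1) (hv 0) (hv 1) (w 0) (w 1) (hw 0) (hw 1) h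
    refine ⟨A, ?_⟩
    intro i j hij g hg
    fin_cases i <;> fin_cases j <;> simp_all
  · obtain ⟨B, hB0, hB1⟩ := wefx_main m (v 1) (v 0) (hv 1) (hv 0) (w 1) (w 0) (hw 1) (hw 0) h
    refine ⟨Bᶜ, ?_⟩
    intro i j hij g hg
    fin_cases i <;> fin_cases j <;> simp_all [compl_compl]
end

section
/- For n = 2 agents with monotone valuations, an EFX+ allocation always exists: there is a partition (A_1, A_2) of G such that for each i ≠ j and every g ∈ A_j, v_i(A_i ∪ {g}) ≥ v_i(A_j). -/
open Finset

private def Ufam {m : ℕ} (v : Finset (Fin m) → ℝ) (S : Finset (Fin m)) : Prop :=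
  ∀ g ∈ Sᶜ, v Sᶜ ≤ v (insert g S)

private lemma escape {m : ℕ} (v : Finset (Fin m) → ℝ)
    (hv : ∀ S T : Finset (Fin m), S ⊆ T → v S ≤ v T) :
    ∀ n (S : Finset (Fin m)), Sᶜ.card ≤ n →
      Ufam v S ∨ ∃ C, Ufam v C ∧ v C < v Sᶜ := by
  intro n
  induction n with
  | zero =>
    intro S hS
    left
    intro g hg
    have : Sᶜ = ∅ := Finset.card_eq_zero.mp (Nat.le_zero.mp hS)
    simp [this] at hg
  | succ n ih =>
    intro S hS
    by_cases hU : Ufam v S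
    · exact Or.inl hU
    · right
      simp only [Ufam, not_forall] at hU
      obtain ⟨g, hg, hlt⟩ := hU
      push_neg at hlt
      have hcompl : (insert g S)ᶜ = Sᶜ.erase g := Finset.compl_insert
      have hcard : (insert g S)ᶜ.card ≤ n := by
        rw [hcompl, Finset.card_erase_of_mem hg]
        omega
      rcases ih (insert g S) hcard with h' | ⟨C, hC, hvC⟩
      · exact ⟨insert g S, h', hlt⟩
      · refine ⟨C, hC, lt_of_lt_of_le hvC ?_⟩
        rw [hcompl]
        exact hv _ _ (Finset.erase_subset _ _)

private lemma core {m : ℕ} (v : Finset (Fin m) → ℝ)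
    (hv : ∀ S T : Finset (Fin m), S ⊆ T → v S ≤ v T) :
    ∃ A : Finset (Fin m),
      (∀ g ∈ Aᶜ, v Aᶜ ≤ v (insert g A)) ∧
      (∀ g ∈ A, v A ≤ v (insert g Aᶜ)) := by
  classical
  have hne : (Finset.univ.filter (fun S : Finset (Fin m) => Ufam v S)).Nonempty := by
    refine ⟨Finset.univ, ?_⟩
    simp only [Finset.mem_filter, Finset.mem_univ, true_and]
    intro g hg
    simp at hg
  obtain ⟨A, hAmem, hAmin⟩ :=
    Finset.exists_min_image (Finset.univ.filter (fun S : Finset (Fin m) => Ufam v S)) v hne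
  have hAU : Ufam v A := (Finset.mem_filter.mp hAmem).2
  have hmin : ∀ S : Finset (Fin m), Ufam v S → v A ≤ v S := by
    intro S hS
    exact hAmin S (Finset.mem_filter.mpr ⟨Finset.mem_univ _, hS⟩)
  refine ⟨A, hAU, ?_⟩
  intro g hg
  by_contra hbad
  push_neg at hbad
  -- T = insert g Aᶜ, v T < v A
  have hTc : (insert g Aᶜ)ᶜ = A.erase g := by
    rw [Finset.compl_insert, compl_compl]
  rcases escape v hv (insert g Aᶜ)ᶜ.card (insert g Aᶜ) le_rfl with hU | ⟨C, hC, hvC⟩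
  · exact absurd (hmin _ hU) (not_le.mpr hbad)
  · have h1 : v (insert g Aᶜ)ᶜ ≤ v A := by
      rw [hTc]; exact hv _ _ (Finset.erase_subset _ _)
    exact absurd (hmin C hC) (not_le.mpr (lt_of_lt_of_le hvC h1))

theorem stmt15 (m : ℕ) (v₁ v₂ : Finset (Fin m) → ℝ)
    (h₁ : ∀ S T : Finset (Fin m), S ⊆ T → v₁ S ≤ v₁ T)
    (h₂ : ∀ S T : Finset (Fin m), S ⊆ T → v₂ S ≤ v₂ T)
    (h01 : v₁ ∅ = 0) (h02 : v₂ ∅ = 0) :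
    ∃ A : Finset (Fin m),
      (∀ g ∈ Aᶜ, v₁ Aᶜ ≤ v₁ (insert g A)) ∧
      (∀ g ∈ A, v₂ A ≤ v₂ (insert g Aᶜ)) := by
  obtain ⟨A, hA1, hA2⟩ := core v₁ h₁
  by_cases hc : v₂ A ≤ v₂ Aᶜ
  · refine ⟨A, hA1, ?_⟩
    intro g hg
    exact le_trans hc (h₂ _ _ (Finset.subset_insert _ _))
  · refine ⟨Aᶜ, ?_, ?_⟩
    · intro g hg
      rw [compl_compl] at hg ⊢
      exact hA2 g hg
    · intro g hg
      rw [compl_compl]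
      exact le_trans (le_of_not_ge hc) (h₂ _ _ (Finset.subset_insert _ _))
end
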